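/- arXiv:0812.0554 — 6 statements merged into one kernel-verified Lean document; each statement's English description precedes it below -/
import Mathlib

section
/- Let a be a densely defined closed operator on a Hilbert space H. Then the operator 1 + a*a, defined on its natural domain, is injective, and for x in the domain of a, the functional y ↦ ⟨x,y⟩ + ⟨ax,ay⟩ on the graph Hilbert space D has norm equal to the graph norm ‖x‖_D. -/
/-- For a densely defined closed operator `a` on a Hilbert space `H`:
(i) `1 + a*a`, defined on its natural domain
`{x ∈ dom a | a x ∈ dom a*}`, is injective; and
(ii) for `x` in the domain of `a`, the functional `y ↦ ⟨x,y⟩ + ⟨ax,ay⟩` on the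
graph Hilbert space `D` has norm equal to the graph norm
`‖x‖_D = √(‖x‖² + ‖ax‖²)`: it is bounded by `‖x‖_D ‖y‖_D` and the bound is
attained at `y = x`. -/
theorem one_add_adjoint_mul_injective_and_functional_norm {H : Type*}
    [NormedAddCommGroup H] [InnerProductSpace ℂ H] [CompleteSpace H]
    (a : H →ₗ.[ℂ] H) (hdense : Dense (a.domain : Set H)) (hclosed : a.IsClosed) :
    (∀ (x : a.domain) (hx : a x ∈ a.adjoint.domain),
        (x : H) + a.adjoint ⟨a x, hx⟩ = 0 → (x : H) = 0) ∧
    (∀ x : a.domain,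
      (∀ y : a.domain,
          ‖(inner ℂ (x : H) (y : H) + inner ℂ (a x) (a y) : ℂ)‖ ≤
            Real.sqrt (‖(x : H)‖ ^ 2 + ‖a x‖ ^ 2) *
              Real.sqrt (‖(y : H)‖ ^ 2 + ‖a y‖ ^ 2)) ∧
        (inner ℂ (x : H) (x : H) + inner ℂ (a x) (a x) : ℂ) =
          (Real.sqrt (‖(x : H)‖ ^ 2 + ‖a x‖ ^ 2) *
            Real.sqrt (‖(x : H)‖ ^ 2 + ‖a x‖ ^ 2) : ℝ)) := by
  constructor
  · intro x hx h
    have key : (inner ℂ ((x : H) + a.adjoint ⟨a x, hx⟩) (x : H) : ℂ) = 0 := by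
      rw [h, inner_zero_left]
    rw [inner_add_left] at key
    have hfa := a.adjoint_isFormalAdjoint hdense ⟨a x, hx⟩ x
    rw [hfa] at key
    rw [inner_self_eq_norm_sq_to_K, inner_self_eq_norm_sq_to_K] at key
    have key' : (‖(x : H)‖ ^ 2 + ‖(a x : H)‖ ^ 2 : ℝ) = 0 := by
      have := congrArg Complex.re key
      simpa [← Complex.ofReal_pow] using this
    have : ‖(x : H)‖ = 0 := by nlinarith [sq_nonneg ‖(x : H)‖, sq_nonneg ‖(a x : H)‖]
    exact norm_eq_zero.mp this
  · intro x
    constructor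
    · intro y
      have h1 : ‖(inner ℂ (x : H) (y : H) + inner ℂ (a x) (a y) : ℂ)‖ ≤
          ‖(x : H)‖ * ‖(y : H)‖ + ‖a x‖ * ‖a y‖ := by
        refine (norm_add_le _ _).trans ?_
        gcongr <;> exact norm_inner_le_norm _ _
      refine h1.trans ?_
      have hx2 : (0:ℝ) ≤ ‖(x : H)‖ ^ 2 + ‖a x‖ ^ 2 := by positivity
      have hy2 : (0:ℝ) ≤ ‖(y : H)‖ ^ 2 + ‖a y‖ ^ 2 := by positivity
      have h2 : (‖(x : H)‖ * ‖(y : H)‖ + ‖a x‖ * ‖a y‖) ^ 2 ≤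
          (‖(x : H)‖ ^ 2 + ‖a x‖ ^ 2) * (‖(y : H)‖ ^ 2 + ‖a y‖ ^ 2) := by
        nlinarith [sq_nonneg (‖(x : H)‖ * ‖a y‖ - ‖a x‖ * ‖(y : H)‖)]
      have hl : (0:ℝ) ≤ ‖(x : H)‖ * ‖(y : H)‖ + ‖a x‖ * ‖a y‖ := by positivity
      calc ‖(x : H)‖ * ‖(y : H)‖ + ‖a x‖ * ‖a y‖
          = Real.sqrt ((‖(x : H)‖ * ‖(y : H)‖ + ‖a x‖ * ‖a y‖) ^ 2) :=
            (Real.sqrt_sq hl).symm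
        _ ≤ Real.sqrt ((‖(x : H)‖ ^ 2 + ‖a x‖ ^ 2) * (‖(y : H)‖ ^ 2 + ‖a y‖ ^ 2)) :=
            Real.sqrt_le_sqrt h2
        _ = _ := Real.sqrt_mul hx2 _
    · have hx2 : (0:ℝ) ≤ ‖(x : H)‖ ^ 2 + ‖a x‖ ^ 2 := by positivity
      rw [Real.mul_self_sqrt hx2]
      rw [inner_self_eq_norm_sq_to_K, inner_self_eq_norm_sq_to_K]
      norm_cast
end

section
/- Let a be a densely defined closed operator on a Hilbert space H. Then (1+a*a)^{-1} is a bounded self-adjoint operator on H, and the bounded operators a(1+a*a)^{-1} and (1+a*a)^{-1}a* (the latter extended by continuity from the domain of a*) are adjoints of each other. -/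
open scoped InnerProduct ComplexConjugate

local notation "⟪" x ", " y "⟫" => @inner ℂ _ _ x y

/-- A closed densely defined operator has densely defined adjoint. -/
theorem dense_adjoint_domain_aux {H : Type*} [NormedAddCommGroup H] [InnerProductSpace ℂ H]
    [CompleteSpace H] (a : H →ₗ.[ℂ] H) (hdense : Dense (a.domain : Set H))
    (hclosed : a.IsClosed) : Dense (a.adjoint.domain : Set H) := by
  rw [Submodule.dense_iff_topologicalClosure_eq_top,
    Submodule.topologicalClosure_eq_top_iff]
  rw [Submodule.eq_bot_iff]
  intro y hy
  -- consider the graph of `a` inside `WithLp 2 (H × H)`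
  set e := WithLp.prodContinuousLinearEquiv 2 ℂ H H
  set G : Submodule ℂ (WithLp 2 (H × H)) := a.graph.comap (e : WithLp 2 (H × H) →ₗ[ℂ] H × H)
  have hGclosed : IsClosed (G : Set (WithLp 2 (H × H))) := by
    have : (G : Set (WithLp 2 (H × H))) = e ⁻¹' (a.graph : Set (H × H)) := rfl
    rw [this]
    exact hclosed.preimage e.continuous
  have : CompleteSpace G := hGclosed.completeSpace_coe
  have hmem : (e.symm (0, y)) ∈ Gᗮᗮ := by
    intro u hu
    -- `u ∈ Gᗮ` implies `-(e u).2 ∈ a.adjoint.domain`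
    have hu' : ∀ x : a.domain, ⟪(-(e u).2 : H), a x⟫ = ⟪(e u).1, (x : H)⟫ := by
      intro x
      have hx : (e.symm ((x : H), a x)) ∈ G := by
        simp only [G, Submodule.mem_comap]
        have : (e : WithLp 2 (H × H) →ₗ[ℂ] H × H) (e.symm ((x : H), a x)) = ((x : H), a x) := by
          simp
        rw [this]
        exact a.mem_graph x
      have := hu _ hx
      simp only [WithLp.prod_inner_apply] at this
      have h1 : (e.symm ((x : H), a x) : WithLp 2 (H × H)).ofLp.1 = (x : H) := rfl
      have h2 : (e.symm ((x : H), a x) : WithLp 2 (H × H)).ofLp.2 = a x := rfl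
      rw [h1, h2] at this
      have hfst : ((u : WithLp 2 (H × H)).ofLp.1 : H) = (e u).1 := rfl
      have hsnd : ((u : WithLp 2 (H × H)).ofLp.2 : H) = (e u).2 := rfl
      rw [hfst, hsnd] at this
      have this2 := congrArg (starRingEnd ℂ) this
      simp only [map_add, inner_conj_symm, map_zero] at this2
      rw [inner_neg_left]
      linear_combination -this2
    have hdom : -(e u).2 ∈ a.adjoint.domain := by
      apply LinearPMap.mem_adjoint_domain_of_exists
      exact ⟨(e u).1, fun x => (hu' x).symm⟩
    rw [Submodule.mem_orthogonal'] at hy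
    have hy0 : ⟪(e u).2, y⟫ = 0 := by
      have h := hy (-(e u).2) hdom
      rw [inner_neg_right] at h
      have h' : ⟪y, (e u).2⟫ = 0 := by linear_combination -h
      rw [← inner_conj_symm, h', map_zero]
    rw [WithLp.prod_inner_apply]
    have h1 : ((u : WithLp 2 (H × H)).ofLp.1 : H) = (e u).1 := rfl
    have h2 : ((u : WithLp 2 (H × H)).ofLp.2 : H) = (e u).2 := rfl
    have h3 : ((e.symm (0, y) : WithLp 2 (H × H)).ofLp.1 : H) = 0 := rfl
    have h4 : ((e.symm (0, y) : WithLp 2 (H × H)).ofLp.2 : H) = y := rfl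
    rw [h1, h2, h3, h4, inner_zero_right, hy0, add_zero]
  rw [Submodule.orthogonal_orthogonal] at hmem
  have : ((0 : H), y) ∈ a.graph := hmem
  exact a.graph_fst_eq_zero_snd this rfl

open ContinuousLinearMap in
/-- For a densely defined closed operator `a` on a Hilbert space `H`:
if `B` is the bounded operator `(1+a*a)⁻¹` (characterized by `B x ∈ dom a`,
`a(Bx) ∈ dom a*` and `(1 + a*a)(Bx) = x`), `T` is the bounded operator
`a(1+a*a)⁻¹`, and `C` is the bounded extension of `(1+a*a)⁻¹ a*` from `dom a*`,
then `B` is self-adjoint and `T` and `C` are adjoints of each other. -/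
theorem resolvent_selfadjoint_and_adjoint_pair {H : Type*}
    [NormedAddCommGroup H] [InnerProductSpace ℂ H] [CompleteSpace H]
    (a : H →ₗ.[ℂ] H) (hdense : Dense (a.domain : Set H)) (hclosed : a.IsClosed)
    (B T C : H →L[ℂ] H)
    (hBdom : ∀ x : H, B x ∈ a.domain)
    (hB : ∀ x : H, ∃ h : a ⟨B x, hBdom x⟩ ∈ a.adjoint.domain,
        B x + a.adjoint ⟨a ⟨B x, hBdom x⟩, h⟩ = x)
    (hT : ∀ x : H, T x = a ⟨B x, hBdom x⟩)
    (hC : ∀ y : a.adjoint.domain, C y = B (a.adjoint y)) :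
    ContinuousLinearMap.adjoint B = B ∧ ContinuousLinearMap.adjoint T = C := by
  have hadj := a.adjoint_isFormalAdjoint hdense
  -- the key symmetric bilinear computation
  have key : ∀ x y : H, ⟪B x, y⟫ = ⟪B x, B y⟫ + ⟪T x, T y⟫ := by
    intro x y
    obtain ⟨hy, hy'⟩ := hB y
    conv_lhs => rw [← hy']
    rw [inner_add_right]
    congr 1
    rw [hT, hT]
    rw [← inner_conj_symm]
    rw [hadj ⟨_, hy⟩ ⟨B x, hBdom x⟩]
    rw [inner_conj_symm]
  have hBsa : ∀ x y : H, ⟪B x, y⟫ = ⟪x, B y⟫ := by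
    intro x y
    rw [key x y, ← inner_conj_symm x (B y), key y x]
    simp only [map_add, inner_conj_symm]
  have hBadj : ContinuousLinearMap.adjoint B = B := by
    symm
    rw [ContinuousLinearMap.eq_adjoint_iff]
    exact hBsa
  refine ⟨hBadj, ?_⟩
  have hdense' := dense_adjoint_domain_aux a hdense hclosed
  have hfun : ⇑(ContinuousLinearMap.adjoint T) = ⇑C := by
    refine Continuous.ext_on hdense' (ContinuousLinearMap.adjoint T).continuous C.continuous ?_
    rintro y hy
    refine ext_inner_right ℂ fun x => ?_
    rw [ContinuousLinearMap.adjoint_inner_left]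
    rw [hC ⟨y, hy⟩]
    rw [hBsa (a.adjoint ⟨y, hy⟩) x]
    rw [hadj ⟨y, hy⟩ ⟨B x, hBdom x⟩, ← hT]
  exact ContinuousLinearMap.ext fun x => congrFun hfun x
end

section
/- Let a be a densely defined closed operator on a Hilbert space H. Then for t → ∞, the operators (1+t²a*a)^{-1} converge in operator norm to the orthogonal projection onto the kernel of a, provided the range of a is closed and a is Fredholm-like in the sense that ‖ax‖ ≥ c‖x‖ for some c > 0 and all x in the domain of a orthogonal to ker a. -/
open scoped InnerProductSpace

/-- Let `a` be a densely defined closed operator on a Hilbert space `H` with closed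
range, satisfying `‖ax‖ ≥ c‖x‖` for some `c > 0` and all `x ∈ dom a ∩ (ker a)ᗮ`.
Let `K = ker a`, let `P` be the orthogonal projection onto `K`, and for each `t`
let `B t = (1 + t² a*a)⁻¹` (characterized by its defining property). Then
`B t → P` in operator norm as `t → ∞`. -/
theorem resolvent_tendsto_kernel_projection {H : Type*}
    [NormedAddCommGroup H] [InnerProductSpace ℂ H] [CompleteSpace H]
    (a : H →ₗ.[ℂ] H) (hdense : Dense (a.domain : Set H)) (hclosed : a.IsClosed)
    (hrange : IsClosed (Set.range fun x : a.domain => a x))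
    (K : Submodule ℂ H)
    (hK : ∀ x : H, x ∈ K ↔ ∃ hx : x ∈ a.domain, a ⟨x, hx⟩ = 0)
    (c : ℝ) (hc : 0 < c)
    (hcoerc : ∀ x : a.domain, (x : H) ∈ Kᗮ → c * ‖(x : H)‖ ≤ ‖a x‖)
    (P : H →L[ℂ] H)
    (hPK : ∀ x ∈ K, P x = x) (hPKo : ∀ x ∈ Kᗮ, P x = 0)
    (B : ℝ → H →L[ℂ] H)
    (hBdom : ∀ (t : ℝ) (x : H), B t x ∈ a.domain)
    (hB : ∀ (t : ℝ) (x : H), ∃ h : a ⟨B t x, hBdom t x⟩ ∈ a.adjoint.domain,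
        B t x + (t ^ 2 : ℂ) • a.adjoint ⟨a ⟨B t x, hBdom t x⟩, h⟩ = x) :
    Filter.Tendsto (fun t : ℝ => ‖B t - P‖) Filter.atTop (nhds 0) := by
  have hadj := a.adjoint_isFormalAdjoint hdense
  have hAdj : ∀ (z : a.adjoint.domain) (w : a.domain),
      ⟪(w : H), a.adjoint z⟫_ℂ = ⟪a w, (z : H)⟫_ℂ := by
    intro z w
    rw [← inner_conj_symm, hadj z w, inner_conj_symm]
  -- K is closed
  have hKc : IsClosed (K : Set H) := by
    have heq : (K : Set H) = (fun x : H => (x, (0 : H))) ⁻¹' (a.graph : Set (H × H)) := by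
      ext x
      simp only [Set.mem_preimage, SetLike.mem_coe, LinearPMap.mem_graph_iff, hK]
      constructor
      · rintro ⟨hx, h0⟩
        exact ⟨⟨x, hx⟩, by simp [h0]⟩
      · rintro ⟨y, rfl, h2⟩
        exact ⟨y.2, by simpa using h2⟩
    rw [heq]
    exact hclosed.preimage (continuous_id.prodMk continuous_const)
  haveI : CompleteSpace K := hKc.completeSpace_coe
  -- B t fixes K
  have claim0 : ∀ (t : ℝ) (y : H), y ∈ K → B t y = y := by
    intro t y hy
    obtain ⟨hyd, hay⟩ := (hK y).mp hy
    obtain ⟨h, e⟩ := hB t y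
    set u := B t y with hu
    set w : a.domain := ⟨u, hBdom t y⟩ - ⟨y, hyd⟩ with hw
    have hwv : (w : H) = u - y := rfl
    have haw : a ⟨u, hBdom t y⟩ = a w := by
      rw [hw, a.map_sub, hay, sub_zero]
    have e' : (t ^ 2 : ℂ) • a.adjoint ⟨a ⟨u, hBdom t y⟩, h⟩ = y - u :=
      eq_sub_of_add_eq' e
    have E : (t ^ 2 : ℂ) * ((‖a w‖ : ℂ) ^ 2) = -((‖u - y‖ : ℂ) ^ 2) := by
      have h1 : ⟪(w : H), (t ^ 2 : ℂ) • a.adjoint ⟨a ⟨u, hBdom t y⟩, h⟩⟫_ℂ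
          = (t ^ 2 : ℂ) * ((‖a w‖ : ℂ) ^ 2) := by
        rw [inner_smul_right, hAdj]
        congr 1
        show ⟪a w, a ⟨u, hBdom t y⟩⟫_ℂ = _
        rw [haw, inner_self_eq_norm_sq_to_K]
        norm_cast
      have h2 : ⟪(w : H), y - u⟫_ℂ = -((‖u - y‖ : ℂ) ^ 2) := by
        rw [hwv, (neg_sub u y).symm, inner_neg_right, inner_self_eq_norm_sq_to_K]
        norm_cast
      rw [← h1, e', h2]
    have hre : (t ^ 2 : ℝ) * ‖a w‖ ^ 2 = -(‖u - y‖ ^ 2) := by exact_mod_cast E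
    have hz : ‖u - y‖ ^ 2 ≤ 0 := by
      nlinarith [mul_nonneg (sq_nonneg t) (sq_nonneg ‖a w‖)]
    have hn : ‖u - y‖ = 0 := by nlinarith [norm_nonneg (u - y)]
    exact sub_eq_zero.mp (norm_eq_zero.mp hn)
  -- B t maps Kᗮ into Kᗮ
  have claim1 : ∀ (t : ℝ) (z : H), z ∈ Kᗮ → B t z ∈ Kᗮ := by
    intro t z hz
    obtain ⟨h, e⟩ := hB t z
    set v := B t z with hv
    obtain ⟨p, hp, q, hq, hpq⟩ := K.exists_add_mem_mem_orthogonal v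
    obtain ⟨hpd, hap⟩ := (hK p).mp hp
    have hinner := congrArg (fun r => ⟪p, r⟫_ℂ) e
    simp only [inner_add_right] at hinner
    have h1 : ⟪p, v⟫_ℂ = (‖p‖ : ℂ) ^ 2 := by
      rw [hpq, inner_add_right, inner_self_eq_norm_sq_to_K,
        (Submodule.mem_orthogonal K q).mp hq p hp, add_zero]
      norm_cast
    have h2 : ⟪p, (t ^ 2 : ℂ) • a.adjoint ⟨a ⟨v, hBdom t z⟩, h⟩⟫_ℂ = 0 := by
      rw [inner_smul_right]
      have h3 := hAdj ⟨a ⟨v, hBdom t z⟩, h⟩ ⟨p, hpd⟩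
      simp only [hap, inner_zero_left] at h3
      rw [h3, mul_zero]
    have h4 : ⟪p, z⟫_ℂ = 0 := (Submodule.mem_orthogonal K z).mp hz p hp
    rw [h1, h2, h4, add_zero] at hinner
    have hp0 : p = 0 := by
      have : ‖p‖ = 0 := by
        have : (‖p‖ : ℂ) ^ 2 = 0 := hinner
        exact_mod_cast pow_eq_zero_iff two_ne_zero |>.mp (by exact_mod_cast this)
      exact norm_eq_zero.mp this
    rw [hpq, hp0, zero_add]
    exact hq
  -- quantitative bound on Kᗮ
  have claim2 : ∀ (t : ℝ) (z : H), z ∈ Kᗮ → (1 + t ^ 2 * c ^ 2) * ‖B t z‖ ≤ ‖z‖ := by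
    intro t z hz
    obtain ⟨h, e⟩ := hB t z
    set v := B t z with hv
    have hvK : v ∈ Kᗮ := claim1 t z hz
    have hinner := congrArg (fun r => ⟪v, r⟫_ℂ) e
    simp only [inner_add_right] at hinner
    have h1 : ⟪v, v⟫_ℂ = (‖v‖ : ℂ) ^ 2 := inner_self_eq_norm_sq_to_K v
    have h2 : ⟪v, (t ^ 2 : ℂ) • a.adjoint ⟨a ⟨v, hBdom t z⟩, h⟩⟫_ℂ
        = (t ^ 2 : ℂ) * (‖a ⟨v, hBdom t z⟩‖ : ℂ) ^ 2 := by
      rw [inner_smul_right]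
      congr 1
      have h3 := hAdj ⟨a ⟨v, hBdom t z⟩, h⟩ ⟨v, hBdom t z⟩
      rw [h3]
      show ⟪a ⟨v, hBdom t z⟩, a ⟨v, hBdom t z⟩⟫_ℂ = _
      rw [inner_self_eq_norm_sq_to_K]
      norm_cast
    rw [h1, h2] at hinner
    have hE : ((‖v‖ ^ 2 + t ^ 2 * ‖a ⟨v, hBdom t z⟩‖ ^ 2 : ℝ) : ℂ) = ⟪v, z⟫_ℂ := by
      push_cast
      exact_mod_cast hinner
    have hre : ‖v‖ ^ 2 + t ^ 2 * ‖a ⟨v, hBdom t z⟩‖ ^ 2 = (⟪v, z⟫_ℂ).re := by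
      rw [← hE, Complex.ofReal_re]
    have hcs : (⟪v, z⟫_ℂ).re ≤ ‖v‖ * ‖z‖ := by
      have := re_inner_le_norm (𝕜 := ℂ) v z
      simpa using this
    have hco := hcoerc ⟨v, hBdom t z⟩ hvK
    have hmain : (1 + t ^ 2 * c ^ 2) * ‖v‖ ^ 2 ≤ ‖v‖ * ‖z‖ := by
      nlinarith [hre, hcs,
        mul_le_mul_of_nonneg_left
          (mul_self_le_mul_self (mul_nonneg hc.le (norm_nonneg v)) hco) (sq_nonneg t)]
    rcases eq_or_lt_of_le (norm_nonneg v) with h0 | h0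
    · rw [← h0, mul_zero]
      exact norm_nonneg z
    · nlinarith [hmain, h0]
  -- operator norm bound
  have hop : ∀ t : ℝ, ‖B t - P‖ ≤ (1 + t ^ 2 * c ^ 2)⁻¹ := by
    intro t
    have hpos : (0 : ℝ) < 1 + t ^ 2 * c ^ 2 := by positivity
    apply ContinuousLinearMap.opNorm_le_bound _ (by positivity)
    intro x
    obtain ⟨y, hy, z, hz, rfl⟩ := K.exists_add_mem_mem_orthogonal x
    have hPx : P (y + z) = y := by rw [map_add, hPK y hy, hPKo z hz, add_zero]
    have hBx : B t (y + z) = y + B t z := by rw [map_add, claim0 t y hy]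
    have hsub : (B t - P) (y + z) = B t z := by
      rw [ContinuousLinearMap.sub_apply, hBx, hPx, add_sub_cancel_left]
    rw [hsub]
    have h2 := claim2 t z hz
    have hzx : ‖z‖ ≤ ‖y + z‖ := by
      have ho : ⟪y, z⟫_ℂ = 0 := (Submodule.mem_orthogonal K z).mp hz y hy
      have hn := norm_add_sq_eq_norm_sq_add_norm_sq_of_inner_eq_zero y z ho
      nlinarith [norm_nonneg (y + z), norm_nonneg y, norm_nonneg z]
    calc ‖B t z‖ = (1 + t ^ 2 * c ^ 2)⁻¹ * ((1 + t ^ 2 * c ^ 2) * ‖B t z‖) := by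
          field_simp
      _ ≤ (1 + t ^ 2 * c ^ 2)⁻¹ * ‖y + z‖ := by
          apply mul_le_mul_of_nonneg_left (h2.trans hzx) (by positivity)
  -- conclude
  have hg : Filter.Tendsto (fun t : ℝ => (1 + t ^ 2 * c ^ 2)⁻¹) Filter.atTop (nhds 0) := by
    apply Filter.Tendsto.comp tendsto_inv_atTop_zero
    apply Filter.tendsto_atTop_add_const_left
    exact (Filter.tendsto_pow_atTop two_ne_zero).atTop_mul_const (by positivity)
  exact squeeze_zero (fun t => norm_nonneg _) hop hg
end

section
/- Let A be a Fredholm operator between Hilbert spaces such that (1+A*A)^{-1} and (1+AA*)^{-1} are trace class. Then the index of A equals Tr (1+A*A)^{-1} − Tr (1+AA*)^{-1}. -/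
set_option maxHeartbeats 1000000

open ContinuousLinearMap Filter Topology

set_option linter.unusedSectionVars false

local notation "⟪" x ", " y "⟫" => @inner ℂ _ _ x y

section helpers

variable {H K : Type*} [NormedAddCommGroup H] [InnerProductSpace ℂ H] [CompleteSpace H]
  [NormedAddCommGroup K] [InnerProductSpace ℂ K] [CompleteSpace K]

private lemma my_parseval {ι : Type*} (b : HilbertBasis ι ℂ H) (x : H) :
    HasSum (fun i => ‖⟪b i, x⟫‖ ^ 2) (‖x‖ ^ 2) := by
  have h := b.hasSum_inner_mul_inner x x
  have h2 : (fun i => ⟪x, b i⟫ * ⟪b i, x⟫) = fun i => ((‖⟪b i, x⟫‖ ^ 2 : ℝ) : ℂ) := by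
    funext i
    rw [← inner_conj_symm x (b i), RCLike.conj_mul]
    norm_cast
  rw [h2, inner_self_eq_norm_sq_to_K] at h
  rw [← RCLike.ofReal_pow] at h
  exact (RCLike.hasSum_ofReal ℂ).mp h

variable (A : H →L[ℂ] K) (B : H →L[ℂ] H)

private lemma my_sa (hB : B ∘L (1 + adjoint A ∘L A) = 1) : IsSelfAdjoint B := by
  have hC : adjoint (1 + adjoint A ∘L A) = 1 + adjoint A ∘L A := by
    rw [← star_eq_adjoint]
    simp only [star_add, star_one]
    congr 1
    rw [star_eq_adjoint, adjoint_comp, adjoint_adjoint]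
  rw [isSelfAdjoint_iff']
  have h1 : adjoint (1 + adjoint A ∘L A) ∘L adjoint B = 1 := by
    rw [← adjoint_comp, hB, ← star_eq_adjoint, star_one]
  rw [hC] at h1
  calc adjoint B = (B ∘L (1 + adjoint A ∘L A)) ∘L adjoint B := by
        rw [hB, one_def, id_comp]
    _ = B ∘L ((1 + adjoint A ∘L A) ∘L adjoint B) := by rw [comp_assoc]
    _ = B := by rw [h1, one_def, comp_id]

private lemma my_expand (hB' : (1 + adjoint A ∘L A) ∘L B = 1) (x : H) : (1 + adjoint A ∘L A) (B x) = x := by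
  have := congrArg (fun T : H →L[ℂ] H => T x) hB'
  simpa using this

private lemma my_fix (hB : B ∘L (1 + adjoint A ∘L A) = 1) (x : H) (hx : A x = 0) : B x = x := by
  have h1 : (1 + adjoint A ∘L A) x = x := by simp [hx]
  have := congrArg (fun T : H →L[ℂ] H => T x) hB
  simp only [comp_apply, one_apply_eq_self] at this
  rw [h1] at this; exact this

private lemma my_id (hB' : (1 + adjoint A ∘L A) ∘L B = 1) (x : H) :
    ⟪x, B x⟫ = ((‖B x‖ ^ 2 + ‖A (B x)‖ ^ 2 : ℝ) : ℂ) := by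
  have h0 : ⟪x, B x⟫ = ⟪(1 + adjoint A ∘L A) (B x), B x⟫ := by
    rw [my_expand A B hB' x]
  rw [h0, add_apply, one_apply_eq_self, comp_apply, inner_add_left, adjoint_inner_left,
    inner_self_eq_norm_sq_to_K, inner_self_eq_norm_sq_to_K]
  norm_cast

private lemma my_norm_le (hB' : (1 + adjoint A ∘L A) ∘L B = 1) (x : H) : ‖B x‖ ≤ ‖x‖ := by
  have h := my_id A B hB' x
  have h2 : ‖B x‖ ^ 2 ≤ ‖⟪x, B x⟫‖ := by
    rw [h]
    rw [Complex.norm_real, Real.norm_of_nonneg (by positivity)]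
    nlinarith [sq_nonneg (‖A (B x)‖)]
  have h3 : ‖⟪x, B x⟫‖ ≤ ‖x‖ * ‖B x‖ := norm_inner_le_norm x (B x)
  nlinarith [norm_nonneg (B x), norm_nonneg x]

private lemma my_pow_norm_le (hB' : (1 + adjoint A ∘L A) ∘L B = 1) (m : ℕ) (x : H) : ‖(B ^ m) x‖ ≤ ‖x‖ := by
  induction m with
  | zero => simp
  | succ n ih =>
    rw [pow_succ', mul_apply_eq_comp]
    exact le_trans (my_norm_le A B hB' ((B ^ n) x)) ih

private lemma my_sa_pow_inner (hB : B ∘L (1 + adjoint A ∘L A) = 1) (m : ℕ) (x z : H) :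
    ⟪(B ^ m) x, z⟫ = ⟪x, (B ^ m) z⟫ := by
  conv_lhs => rw [← (isSelfAdjoint_iff'.mp ((my_sa A B hB).pow m))]
  rw [adjoint_inner_left]

private lemma my_e1 (hB : B ∘L (1 + adjoint A ∘L A) = 1) (m : ℕ) (x : H) :
    ⟪x, (B ^ (m + m)) x⟫ = ((‖(B ^ m) x‖ ^ 2 : ℝ) : ℂ) := by
  have h1 : (B ^ (m + m)) x = (B ^ m) ((B ^ m) x) := by
    rw [pow_add, mul_apply_eq_comp]
  rw [h1, ← my_sa_pow_inner A B hB m x ((B ^ m) x), inner_self_eq_norm_sq_to_K]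
  norm_cast

private lemma my_e2 (hB : B ∘L (1 + adjoint A ∘L A) = 1)
    (hB' : (1 + adjoint A ∘L A) ∘L B = 1) (m : ℕ) (x : H) :
    ⟪x, (B ^ (m + m + 1)) x⟫
      = ((‖(B ^ (m + 1)) x‖ ^ 2 + ‖A ((B ^ (m + 1)) x)‖ ^ 2 : ℝ) : ℂ) := by
  have h1 : (B ^ (m + m + 1)) x = (B ^ m) (B ((B ^ m) x)) := by
    have h0 : m + m + 1 = m + (1 + m) := by omega
    rw [h0, pow_add, pow_add, pow_one]
    rfl
  have h2 : (B ^ (m + 1)) x = B ((B ^ m) x) := by rw [pow_succ', mul_apply_eq_comp]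
  rw [h1, ← my_sa_pow_inner A B hB m x (B ((B ^ m) x)),
    my_id A B hB' ((B ^ m) x), h2]

private lemma my_r_nonneg (hB : B ∘L (1 + adjoint A ∘L A) = 1)
    (hB' : (1 + adjoint A ∘L A) ∘L B = 1) (k : ℕ) (x : H) :
    0 ≤ (⟪x, (B ^ k) x⟫).re := by
  rcases Nat.even_or_odd k with ⟨m, rfl⟩ | ⟨m, hm⟩
  · rw [my_e1 A B hB m x, Complex.ofReal_re]; positivity
  · have : k = m + m + 1 := by omega
    subst this
    rw [my_e2 A B hB hB' m x, Complex.ofReal_re]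
    positivity

private lemma my_r_cast (hB : B ∘L (1 + adjoint A ∘L A) = 1)
    (hB' : (1 + adjoint A ∘L A) ∘L B = 1) (k : ℕ) (x : H) :
    ⟪x, (B ^ k) x⟫ = (((⟪x, (B ^ k) x⟫).re : ℝ) : ℂ) := by
  rcases Nat.even_or_odd k with ⟨m, rfl⟩ | ⟨m, hm⟩
  · rw [my_e1 A B hB m x, Complex.ofReal_re]
  · have : k = m + m + 1 := by omega
    subst this
    rw [my_e2 A B hB hB' m x, Complex.ofReal_re]

private lemma my_quad_le (hB' : (1 + adjoint A ∘L A) ∘L B = 1) (y : H) :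
    ‖B y‖ ^ 2 + ‖A (B y)‖ ^ 2 ≤ ‖y‖ ^ 2 := by
  have h := my_id A B hB' y
  have h2 : (⟪y, B y⟫).re = ‖B y‖ ^ 2 + ‖A (B y)‖ ^ 2 := by rw [h, Complex.ofReal_re]
  have h3 : (⟪y, B y⟫).re ≤ ‖⟪y, B y⟫‖ := Complex.re_le_norm _
  have h4 : ‖⟪y, B y⟫‖ ≤ ‖y‖ * ‖B y‖ := norm_inner_le_norm y (B y)
  have h5 : ‖B y‖ ≤ ‖y‖ := my_norm_le A B hB' y
  nlinarith [norm_nonneg y, norm_nonneg (B y)]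

private lemma my_r_antitone (hB : B ∘L (1 + adjoint A ∘L A) = 1)
    (hB' : (1 + adjoint A ∘L A) ∘L B = 1) (x : H) :
    Antitone (fun k => (⟪x, (B ^ k) x⟫).re) := by
  apply antitone_nat_of_succ_le
  intro k
  rcases Nat.even_or_odd k with ⟨m, rfl⟩ | ⟨m, hm⟩
  · -- k = m + m, k+1 = m+m+1
    rw [my_e1 A B hB m x, my_e2 A B hB hB' m x, Complex.ofReal_re, Complex.ofReal_re]
    have h2 : (B ^ (m + 1)) x = B ((B ^ m) x) := by rw [pow_succ', mul_apply_eq_comp]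
    rw [h2]
    exact my_quad_le A B hB' ((B ^ m) x)
  · have : k = m + m + 1 := by omega
    subst this
    have hk2 : m + m + 1 + 1 = (m + 1) + (m + 1) := by omega
    rw [hk2, my_e1 A B hB (m + 1) x, my_e2 A B hB hB' m x, Complex.ofReal_re,
      Complex.ofReal_re]
    nlinarith [sq_nonneg (‖A ((B ^ (m + 1)) x)‖)]

private lemma my_pow_app (k l : ℕ) (x : H) : (B ^ (k + l)) x = (B ^ k) ((B ^ l) x) := by
  rw [pow_add]; rfl

private lemma my_fix_pow (hB : B ∘L (1 + adjoint A ∘L A) = 1) (k : ℕ) (w : H)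
    (hw : A w = 0) : (B ^ k) w = w := by
  induction k with
  | zero => simp
  | succ n ih => rw [pow_succ, mul_apply_eq_comp, my_fix A B hB w hw, ih]

private lemma my_tendsto_proj (hB : B ∘L (1 + adjoint A ∘L A) = 1)
    (hB' : (1 + adjoint A ∘L A) ∘L B = 1) [FiniteDimensional ℂ (LinearMap.ker (A : H →ₗ[ℂ] K))] (x : H) :
    Tendsto (fun k => (B ^ k) x) atTop
      (𝓝 ((Submodule.orthogonalProjectionOnto (LinearMap.ker (A : H →ₗ[ℂ] K)) x : H))) := by
  haveI : CompleteSpace (LinearMap.ker (A : H →ₗ[ℂ] K)) := FiniteDimensional.complete ℂ _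
  set r : ℕ → ℝ := fun k => (⟪x, (B ^ k) x⟫).re with hrdef
  have hanti : Antitone r := my_r_antitone A B hB hB' x
  have hbdd : BddBelow (Set.range r) :=
    ⟨0, by rintro _ ⟨k, rfl⟩; exact my_r_nonneg A B hB hB' k x⟩
  set L := ⨅ k, r k with hLdef
  have hL : Tendsto r atTop (𝓝 L) := tendsto_atTop_ciInf hanti hbdd
  have hLle : ∀ k, L ≤ r k := fun k => ciInf_le hbdd k
  have hnorm2 : ∀ k, ‖(B ^ k) x‖ ^ 2 = r (k + k) := by
    intro k
    have := my_e1 A B hB k x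
    have h2 : r (k + k) = ((‖(B ^ k) x‖ ^ 2 : ℝ) : ℂ).re := by
      rw [hrdef]; simp only; rw [this]
    rw [h2, Complex.ofReal_re]
  have hcross : ∀ k l, (⟪(B ^ k) x, (B ^ l) x⟫).re = r (k + l) := by
    intro k l
    rw [my_sa_pow_inner A B hB k x ((B ^ l) x), ← my_pow_app B k l x]
  have hdist : ∀ k l, ‖(B ^ k) x - (B ^ l) x‖ ^ 2
      = r (k + k) - 2 * r (k + l) + r (l + l) := by
    intro k l
    rw [@norm_sub_sq ℂ]
    have hre : RCLike.re (⟪(B ^ k) x, (B ^ l) x⟫) = r (k + l) := hcross k l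
    rw [hre, hnorm2 k, hnorm2 l]
  have hshift : ∀ c : ℕ → ℕ, (∀ n, n ≤ c n) → Tendsto (fun n => r (c n)) atTop (𝓝 L) :=
    fun c hc => hL.comp (tendsto_atTop_mono hc tendsto_id)
  have hcauchy : CauchySeq (fun k => (B ^ k) x) := by
    rw [Metric.cauchySeq_iff']
    intro ε hε
    have h2N : Tendsto (fun N : ℕ => r (N + N)) atTop (𝓝 L) :=
      hshift (fun N => N + N) (fun n => by show n ≤ n + n; omega)
    obtain ⟨N, hN⟩ := (Metric.tendsto_atTop.mp h2N) (ε ^ 2 / 2) (by positivity)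
    refine ⟨N, fun n hn => ?_⟩
    have h1 : r (n + n) ≤ r (N + N) := hanti (by omega)
    have h2 : L ≤ r (n + N) := hLle _
    have h3 : dist (r (N + N)) L < ε ^ 2 / 2 := hN N le_rfl
    rw [Real.dist_eq, abs_of_nonneg (by linarith [hLle (N + N)])] at h3
    have h4 := hdist n N
    rw [dist_eq_norm]
    nlinarith [norm_nonneg ((B ^ n) x - (B ^ N) x), hLle (n + n)]
  obtain ⟨y, hy⟩ := cauchySeq_tendsto_of_complete hcauchy
  have hAy : A y = 0 := by
    have t1 : Tendsto (fun m : ℕ => A ((B ^ (m + 1)) x)) atTop (𝓝 (A y)) :=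
      (A.continuous.tendsto y).comp (hy.comp (tendsto_add_atTop_nat 1))
    have t2 : Tendsto (fun m : ℕ => ‖A ((B ^ (m + 1)) x)‖ ^ 2) atTop (𝓝 (‖A y‖ ^ 2)) :=
      (t1.norm).pow 2
    have heq : ∀ m : ℕ, ‖A ((B ^ (m + 1)) x)‖ ^ 2 = r (m + m + 1) - r ((m + 1) + (m + 1)) := by
      intro m
      have h5 : r (m + m + 1)
          = ‖(B ^ (m + 1)) x‖ ^ 2 + ‖A ((B ^ (m + 1)) x)‖ ^ 2 := by
        have := my_e2 A B hB hB' m x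
        have h6 : r (m + m + 1) = (((‖(B ^ (m + 1)) x‖ ^ 2 + ‖A ((B ^ (m + 1)) x)‖ ^ 2 : ℝ)) : ℂ).re := by
          rw [hrdef]; simp only; rw [this]
        rw [h6, Complex.ofReal_re]
      rw [h5, hnorm2 (m + 1)]; ring
    have t3 : Tendsto (fun m : ℕ => ‖A ((B ^ (m + 1)) x)‖ ^ 2) atTop (𝓝 (L - L)) := by
      simp only [heq]
      exact Tendsto.sub (hshift (fun m => m + m + 1) (fun n => by show n ≤ n + n + 1; omega))
        (hshift (fun m => (m + 1) + (m + 1)) (fun n => by show n ≤ (n + 1) + (n + 1); omega))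
    have h7 : ‖A y‖ ^ 2 = L - L := tendsto_nhds_unique t2 t3
    rw [sub_self] at h7
    have : ‖A y‖ = 0 := by nlinarith [norm_nonneg (A y)]
    exact norm_eq_zero.mp this
  have hymem : y ∈ LinearMap.ker (A : H →ₗ[ℂ] K) := by
    simpa [LinearMap.mem_ker] using hAy
  have horth : ∀ w ∈ LinearMap.ker (A : H →ₗ[ℂ] K), ⟪x - y, w⟫ = 0 := by
    intro w hw
    have hw0 : A w = 0 := hw
    have c1 : Tendsto (fun k : ℕ => ⟪(B ^ k) x, w⟫) atTop (𝓝 ⟪y, w⟫) :=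
      hy.inner tendsto_const_nhds
    have c2 : (fun k : ℕ => ⟪(B ^ k) x, w⟫) = fun _ => ⟪x, w⟫ := by
      funext k
      rw [my_sa_pow_inner A B hB k x w, my_fix_pow A B hB k w hw0]
    rw [c2] at c1
    have heq : ⟪y, w⟫ = ⟪x, w⟫ := tendsto_nhds_unique c1 tendsto_const_nhds
    rw [inner_sub_left, heq, sub_self]
  have hproj : ((Submodule.orthogonalProjectionOnto (LinearMap.ker (A : H →ₗ[ℂ] K)) x : H)) = y :=
    Submodule.eq_starProjection_of_mem_of_inner_eq_zero hymem horth
  rw [hproj]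
  exact hy

variable {ι : Type*} (b : HilbertBasis ι ℂ H)

private lemma my_entry_cast (hB : B ∘L (1 + adjoint A ∘L A) = 1)
    (hB' : (1 + adjoint A ∘L A) ∘L B = 1) (x : H) :
    ⟪x, B x⟫ = (((⟪x, B x⟫).re : ℝ) : ℂ) := by
  have h := my_r_cast A B hB hB' 1 x
  rwa [pow_one] at h

private lemma my_summable_re (hB : B ∘L (1 + adjoint A ∘L A) = 1)
    (hB' : (1 + adjoint A ∘L A) ∘L B = 1)
    (hsum : Summable fun i => ⟪b i, B (b i)⟫) :
    Summable fun i => (⟪b i, B (b i)⟫).re := by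
  have h1 : Summable fun i => (((⟪b i, B (b i)⟫).re : ℝ) : ℂ) := by
    have h2 : (fun i => ((((⟪b i, B (b i)⟫).re : ℝ)) : ℂ))
        = fun i => ⟪b i, B (b i)⟫ := by
      funext i; exact (my_entry_cast A B hB hB' (b i)).symm
    rw [h2]; exact hsum
  exact Complex.summable_ofReal.mp h1

private lemma my_summable_pow (hB : B ∘L (1 + adjoint A ∘L A) = 1)
    (hB' : (1 + adjoint A ∘L A) ∘L B = 1)
    (hsum : Summable fun i => ⟪b i, B (b i)⟫) (k : ℕ) :
    Summable fun i => ⟪b i, (B ^ (k + 1)) (b i)⟫ := by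
  have hre : Summable fun i => (⟪b i, (B ^ (k + 1)) (b i)⟫).re := by
    apply Summable.of_nonneg_of_le
      (fun i => my_r_nonneg A B hB hB' (k + 1) (b i))
      (fun i => ?_) (my_summable_re A B b hB hB' hsum)
    have h := my_r_antitone A B hB hB' (b i) (show 1 ≤ k + 1 by omega)
    simpa [pow_one] using h
  have h1 : Summable fun i => (((⟪b i, (B ^ (k + 1)) (b i)⟫).re : ℝ) : ℂ) :=
    Complex.summable_ofReal.mpr hre
  have h2 : (fun i => ((((⟪b i, (B ^ (k + 1)) (b i)⟫).re : ℝ)) : ℂ))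
      = fun i => ⟪b i, (B ^ (k + 1)) (b i)⟫ := by
    funext i; exact (my_r_cast A B hB hB' (k + 1) (b i)).symm
  rw [h2] at h1; exact h1

private lemma my_summable_AB_sq (hB : B ∘L (1 + adjoint A ∘L A) = 1)
    (hB' : (1 + adjoint A ∘L A) ∘L B = 1)
    (hsum : Summable fun i => ⟪b i, B (b i)⟫) :
    Summable fun i => ‖A (B (b i))‖ ^ 2 := by
  apply Summable.of_nonneg_of_le (fun i => sq_nonneg _) (fun i => ?_)
    (my_summable_re A B b hB hB' hsum)
  have h := my_id A B hB' (b i)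
  have h2 : (⟪b i, B (b i)⟫).re = ‖B (b i)‖ ^ 2 + ‖A (B (b i))‖ ^ 2 := by
    rw [h, Complex.ofReal_re]
  nlinarith [sq_nonneg (‖B (b i)‖)]

private lemma my_proj_trace [FiniteDimensional ℂ (LinearMap.ker (A : H →ₗ[ℂ] K))] :
    haveI : CompleteSpace (LinearMap.ker (A : H →ₗ[ℂ] K)) := FiniteDimensional.complete ℂ _
    ∑' i, ⟪b i, ((Submodule.orthogonalProjectionOnto (LinearMap.ker (A : H →ₗ[ℂ] K)) (b i) : H))⟫
      = (Module.finrank ℂ (LinearMap.ker (A : H →ₗ[ℂ] K)) : ℂ) := by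
  haveI : CompleteSpace (LinearMap.ker (A : H →ₗ[ℂ] K)) := FiniteDimensional.complete ℂ _
  set U := LinearMap.ker (A : H →ₗ[ℂ] K)
  let e := stdOrthonormalBasis ℂ U
  have hterm : ∀ i, ⟪b i, ((Submodule.orthogonalProjectionOnto U (b i) : H))⟫
      = ∑ j, ⟪(e j : H), b i⟫ * ⟪b i, (e j : H)⟫ := by
    intro i
    have hPx : ((Submodule.orthogonalProjectionOnto U (b i) : H))
        = ∑ j, ⟪(e j : H), b i⟫ • (e j : H) := by
      rw [e.orthogonalProjectionOnto_apply_eq_sum (b i)]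
      push_cast [Submodule.coe_sum]
      rfl
    rw [hPx, inner_sum]
    congr 1; funext j
    rw [inner_smul_right]
  rw [funext hterm, Summable.tsum_finsetSum (fun j _ => b.summable_inner_mul_inner _ _)]
  have h1 : ∀ j, ∑' i, ⟪(e j : H), b i⟫ * ⟪b i, (e j : H)⟫ = 1 := by
    intro j
    rw [b.tsum_inner_mul_inner, inner_self_eq_norm_sq_to_K]
    have : ‖(e j : H)‖ = 1 := by
      rw [Submodule.norm_coe]
      exact e.orthonormal.1 j
    rw [this]; norm_num
  simp [h1]
  rfl

private lemma my_trace_tendsto (hB : B ∘L (1 + adjoint A ∘L A) = 1)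
    (hB' : (1 + adjoint A ∘L A) ∘L B = 1) [FiniteDimensional ℂ (LinearMap.ker (A : H →ₗ[ℂ] K))]
    (hsum : Summable fun i => ⟪b i, B (b i)⟫) :
    Tendsto (fun k : ℕ => ∑' i, ⟪b i, (B ^ (k + 1)) (b i)⟫) atTop
      (𝓝 ((Module.finrank ℂ (LinearMap.ker (A : H →ₗ[ℂ] K)) : ℂ))) := by
  haveI : CompleteSpace (LinearMap.ker (A : H →ₗ[ℂ] K)) := FiniteDimensional.complete ℂ _
  have main : Tendsto (fun k : ℕ => ∑' i, ⟪b i, (B ^ (k + 1)) (b i)⟫) atTop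
      (𝓝 (∑' i, ⟪b i, ((Submodule.orthogonalProjectionOnto (LinearMap.ker (A : H →ₗ[ℂ] K)) (b i) : H))⟫)) := by
    apply tendsto_tsum_of_dominated_convergence
      (bound := fun i => (⟪b i, B (b i)⟫).re)
      (my_summable_re A B b hB hB' hsum)
    · intro i
      exact tendsto_const_nhds.inner
        ((my_tendsto_proj A B hB hB' (b i)).comp (tendsto_add_atTop_nat 1))
    · apply Filter.Eventually.of_forall
      intro k i
      rw [my_r_cast A B hB hB' (k + 1) (b i), Complex.norm_real,
        Real.norm_of_nonneg (my_r_nonneg A B hB hB' (k + 1) (b i))]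
      have h := my_r_antitone A B hB hB' (b i) (show 1 ≤ k + 1 by omega)
      simpa [pow_one] using h
  rwa [my_proj_trace A b] at main

private lemma my_trace_cyclic {κ : Type*} (c : HilbertBasis κ ℂ K)
    (T : H →L[ℂ] K) (S : K →L[ℂ] H)
    (hT : Summable fun i => ‖T (b i)‖ ^ 2) (hS : Summable fun j => ‖S (c j)‖ ^ 2) :
    (Summable fun i => ⟪b i, S (T (b i))⟫) ∧ (Summable fun j => ⟪c j, T (S (c j))⟫) ∧
      ∑' i, ⟪b i, S (T (b i))⟫ = ∑' j, ⟪c j, T (S (c j))⟫ := by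
  set g : ι × κ → ℂ := fun p => ⟪b p.1, S (c p.2)⟫ * ⟪c p.2, T (b p.1)⟫ with hg_def
  -- summability of g
  have hg : Summable g := by
    have h1 : Summable (fun q : κ × ι => ‖⟪b q.2, S (c q.1)⟫‖ ^ 2) := by
      apply (summable_prod_of_nonneg (fun q => sq_nonneg _)).mpr
      constructor
      · intro j
        exact (my_parseval b (S (c j))).summable
      · apply Summable.congr hS
        intro j
        exact ((my_parseval b (S (c j))).tsum_eq).symm
    have h1' : Summable (fun p : ι × κ => ‖⟪b p.1, S (c p.2)⟫‖ ^ 2) := h1.prod_symm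
    have h2 : Summable (fun p : ι × κ => ‖⟪c p.2, T (b p.1)⟫‖ ^ 2) := by
      apply (summable_prod_of_nonneg (fun q => sq_nonneg _)).mpr
      constructor
      · intro i
        exact (my_parseval c (T (b i))).summable
      · apply Summable.congr hT
        intro i
        exact ((my_parseval c (T (b i))).tsum_eq).symm
    apply Summable.of_norm_bounded (h1'.add h2)
    intro p
    rw [hg_def, norm_mul]
    nlinarith [sq_nonneg (‖⟪b p.1, S (c p.2)⟫‖ - ‖⟪c p.2, T (b p.1)⟫‖),
      norm_nonneg (⟪b p.1, S (c p.2)⟫), norm_nonneg (⟪c p.2, T (b p.1)⟫)]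
  -- fiberwise sums
  have row : ∀ i, HasSum (fun j => g (i, j)) ⟪b i, S (T (b i))⟫ := by
    intro i
    have h := c.hasSum_inner_mul_inner (adjoint S (b i)) (T (b i))
    simp only [adjoint_inner_left] at h
    exact h
  have col : ∀ j, HasSum (fun i => g (i, j)) ⟪c j, T (S (c j))⟫ := by
    intro j
    have h := b.hasSum_inner_mul_inner (adjoint T (c j)) (S (c j))
    simp only [adjoint_inner_left] at h
    have h2 : (fun i => ⟪c j, T (b i)⟫ * ⟪b i, S (c j)⟫) = fun i => g (i, j) := by
      funext i
      simp only [hg_def]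
      ring
    rw [h2] at h
    exact h
  have hgs : HasSum g (∑' p, g p) := hg.hasSum
  have left : HasSum (fun i => ⟪b i, S (T (b i))⟫) (∑' p, g p) :=
    hgs.prod_fiberwise row
  have hswap : HasSum (fun q : κ × ι => g (q.2, q.1)) (∑' p, g p) :=
    (Equiv.prodComm κ ι).hasSum_iff.mpr hgs
  have right : HasSum (fun j => ⟪c j, T (S (c j))⟫) (∑' p, g p) :=
    hswap.prod_fiberwise col
  exact ⟨left.summable, right.summable, left.tsum_eq.trans right.tsum_eq.symm⟩

end helpers

open ContinuousLinearMap in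
/-- Let `A` be a Fredholm operator between Hilbert spaces such that `(1+A*A)⁻¹`
and `(1+AA*)⁻¹` are trace class. Then
`ind A = Tr (1+A*A)⁻¹ − Tr (1+AA*)⁻¹`, where the traces are computed as sums of
diagonal matrix elements in Hilbert bases. -/
theorem index_eq_trace_difference {H₁ H₂ : Type*}
    [NormedAddCommGroup H₁] [InnerProductSpace ℂ H₁] [CompleteSpace H₁]
    [NormedAddCommGroup H₂] [InnerProductSpace ℂ H₂] [CompleteSpace H₂]
    {ι₁ ι₂ : Type*} (b₁ : HilbertBasis ι₁ ℂ H₁) (b₂ : HilbertBasis ι₂ ℂ H₂)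
    (A : H₁ →L[ℂ] H₂)
    (hker : FiniteDimensional ℂ (LinearMap.ker (A : H₁ →ₗ[ℂ] H₂)))
    (hcoker : FiniteDimensional ℂ (LinearMap.ker (adjoint A : H₂ →ₗ[ℂ] H₁)))
    (hrange : IsClosed (Set.range A))
    (B₁ : H₁ →L[ℂ] H₁) (B₂ : H₂ →L[ℂ] H₂)
    (hB₁ : B₁ ∘L (1 + adjoint A ∘L A) = 1) (hB₁' : (1 + adjoint A ∘L A) ∘L B₁ = 1)
    (hB₂ : B₂ ∘L (1 + A ∘L adjoint A) = 1) (hB₂' : (1 + A ∘L adjoint A) ∘L B₂ = 1)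
    (h₁ : Summable fun i => (inner ℂ (b₁ i) (B₁ (b₁ i)) : ℂ))
    (h₂ : Summable fun i => (inner ℂ (b₂ i) (B₂ (b₂ i)) : ℂ)) :
    ((Module.finrank ℂ (LinearMap.ker (A : H₁ →ₗ[ℂ] H₂)) : ℂ) -
        (Module.finrank ℂ (LinearMap.ker (adjoint A : H₂ →ₗ[ℂ] H₁)) : ℂ)) =
      (∑' i, (inner ℂ (b₁ i) (B₁ (b₁ i)) : ℂ)) -
        ∑' i, (inner ℂ (b₂ i) (B₂ (b₂ i)) : ℂ) := by
  haveI := hker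
  haveI := hcoker
  -- restated hypotheses for the "adjoint side"
  have hB₂c : B₂ ∘L (1 + adjoint (adjoint A) ∘L adjoint A) = 1 := by
    rwa [adjoint_adjoint]
  have hB₂c' : (1 + adjoint (adjoint A) ∘L adjoint A) ∘L B₂ = 1 := by
    rwa [adjoint_adjoint]
  -- pointwise inverse identities
  have hexp1 : ∀ x, B₁ ((1 + adjoint A ∘L A) x) = x := by
    intro x
    have := congrArg (fun T : H₁ →L[ℂ] H₁ => T x) hB₁
    simpa using this
  have hexp2 : ∀ y, B₂ ((1 + A ∘L adjoint A) y) = y := by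
    intro y
    have := congrArg (fun T : H₂ →L[ℂ] H₂ => T y) hB₂
    simpa using this
  -- intertwining
  have hABx : ∀ x, A (B₁ x) = B₂ (A x) := by
    intro x
    conv_rhs => rw [← my_expand A B₁ hB₁' x]
    rw [← hexp2 (A (B₁ x))]
    congr 1
    simp only [add_apply, one_apply_eq_self, comp_apply, map_add]
  have hKBx : ∀ y, adjoint A (B₂ y) = B₁ (adjoint A y) := by
    intro y
    conv_rhs => rw [← my_expand (adjoint A) B₂ hB₂c' y]
    rw [← hexp1 (adjoint A (B₂ y))]
    congr 1
    simp only [add_apply, one_apply_eq_self, comp_apply, map_add, adjoint_adjoint]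
  have hABk : ∀ (k : ℕ) x, A ((B₁ ^ k) x) = (B₂ ^ k) (A x) := by
    intro k
    induction k with
    | zero => intro x; simp
    | succ n ih =>
      intro x
      rw [pow_succ, mul_apply_eq_comp, ih (B₁ x), hABx x, ← mul_apply_eq_comp (B₂ ^ n) B₂, ← pow_succ]
  have hKBk : ∀ (k : ℕ) y, adjoint A ((B₂ ^ k) y) = (B₁ ^ k) (adjoint A y) := by
    intro k
    induction k with
    | zero => intro y; simp
    | succ n ih =>
      intro y
      rw [pow_succ, mul_apply_eq_comp, ih (B₂ y), hKBx y, ← mul_apply_eq_comp (B₁ ^ n) B₁, ← pow_succ]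
  -- the operators for the cyclicity argument
  set T : H₁ →L[ℂ] H₂ := A ∘L B₁ with hTdef
  have hT : Summable fun i => ‖T (b₁ i)‖ ^ 2 := by
    have := my_summable_AB_sq A B₁ b₁ hB₁ hB₁' h₁
    apply this.congr
    intro i
    rfl
  -- the trace difference identity for each k
  have key : ∀ k : ℕ,
      (∑' i, ⟪b₁ i, (B₁ ^ (k + 1)) (b₁ i)⟫) - (∑' i, ⟪b₁ i, (B₁ ^ (k + 2)) (b₁ i)⟫)
        = (∑' j, ⟪b₂ j, (B₂ ^ (k + 1)) (b₂ j)⟫)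
          - (∑' j, ⟪b₂ j, (B₂ ^ (k + 2)) (b₂ j)⟫) := by
    intro k
    set S : H₂ →L[ℂ] H₁ := adjoint A ∘L (B₂ ^ (k + 1)) with hSdef
    have hS : Summable fun j => ‖S (b₂ j)‖ ^ 2 := by
      apply Summable.of_nonneg_of_le (fun j => sq_nonneg _) (fun j => ?_)
        (my_summable_AB_sq (adjoint A) B₂ b₂ hB₂c hB₂c' h₂)
      have hs1 : S (b₂ j) = (B₁ ^ k) (adjoint A (B₂ (b₂ j))) := by
        rw [hSdef, comp_apply, pow_succ, mul_apply_eq_comp, hKBk k (B₂ (b₂ j))]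
      rw [hs1]
      exact pow_le_pow_left₀ (norm_nonneg _)
        (my_pow_norm_le A B₁ hB₁' k (adjoint A (B₂ (b₂ j)))) 2
    have hp1 : ∀ (m : ℕ) z, B₁ ((B₁ ^ m) z) = (B₁ ^ (m + 1)) z := by
      intro m z; rw [pow_succ', mul_apply_eq_comp]
    have hp2 : ∀ (m : ℕ) z, (B₂ ^ m) (B₂ z) = (B₂ ^ (m + 1)) z := by
      intro m z; rw [pow_succ, mul_apply_eq_comp]
    have hST : ∀ x, S (T x) = (B₁ ^ (k + 1)) x - (B₁ ^ (k + 2)) x := by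
      intro x
      rw [hSdef, hTdef, comp_apply, comp_apply, hABx x, hp2 (k + 1) (A x),
        ← hABk (k + 2) x]
      have hz : adjoint A (A ((B₁ ^ (k + 2)) x))
          = (1 + adjoint A ∘L A) ((B₁ ^ (k + 2)) x) - (B₁ ^ (k + 2)) x := by
        simp only [add_apply, one_apply_eq_self, comp_apply]
        abel
      rw [hz]
      have hz2 : (1 + adjoint A ∘L A) ((B₁ ^ (k + 2)) x) = (B₁ ^ (k + 1)) x := by
        rw [← hp1 (k + 1) x, my_expand A B₁ hB₁' ((B₁ ^ (k + 1)) x)]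
      rw [hz2]
    have hTS : ∀ y, T (S y) = (B₂ ^ (k + 1)) y - (B₂ ^ (k + 2)) y := by
      intro y
      rw [hTdef, hSdef, comp_apply, comp_apply, hKBk (k + 1) y,
        hp1 (k + 1) (adjoint A y), hABk (k + 2) (adjoint A y)]
      have hz : A (adjoint A y) = (1 + A ∘L adjoint A) y - y := by
        simp only [add_apply, one_apply_eq_self, comp_apply]
        abel
      rw [hz, map_sub]
      have hz2 : (B₂ ^ (k + 2)) ((1 + A ∘L adjoint A) y) = (B₂ ^ (k + 1)) y := by
        rw [← hp2 (k + 1) ((1 + A ∘L adjoint A) y), hexp2 y]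
      rw [hz2]
    obtain ⟨hsum1, hsum2, heq⟩ := my_trace_cyclic b₁ b₂ T S hT hS
    have hl : ∑' i, ⟪b₁ i, S (T (b₁ i))⟫
        = (∑' i, ⟪b₁ i, (B₁ ^ (k + 1)) (b₁ i)⟫) - ∑' i, ⟪b₁ i, (B₁ ^ (k + 2)) (b₁ i)⟫ := by
      rw [← Summable.tsum_sub (my_summable_pow A B₁ b₁ hB₁ hB₁' h₁ k)
        (my_summable_pow A B₁ b₁ hB₁ hB₁' h₁ (k + 1))]
      congr 1
      funext i
      rw [hST (b₁ i), inner_sub_right]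
    have hr : ∑' j, ⟪b₂ j, T (S (b₂ j))⟫
        = (∑' j, ⟪b₂ j, (B₂ ^ (k + 1)) (b₂ j)⟫) - ∑' j, ⟪b₂ j, (B₂ ^ (k + 2)) (b₂ j)⟫ := by
      rw [← Summable.tsum_sub (my_summable_pow (adjoint A) B₂ b₂ hB₂c hB₂c' h₂ k)
        (my_summable_pow (adjoint A) B₂ b₂ hB₂c hB₂c' h₂ (k + 1))]
      congr 1
      funext j
      rw [hTS (b₂ j), inner_sub_right]
    rw [← hl, ← hr, heq]
  -- the constant sequence
  set E : ℕ → ℂ := fun k =>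
    (∑' i, ⟪b₁ i, (B₁ ^ (k + 1)) (b₁ i)⟫) - ∑' j, ⟪b₂ j, (B₂ ^ (k + 1)) (b₂ j)⟫ with hEdef
  have hconst : ∀ k, E k = E 0 := by
    intro k
    induction k with
    | zero => rfl
    | succ n ih =>
      rw [← ih]
      have h := key n
      rw [hEdef]
      simp only
      linear_combination -h
  have hlim : Tendsto E atTop
      (𝓝 ((Module.finrank ℂ (LinearMap.ker (A : H₁ →ₗ[ℂ] H₂)) : ℂ)
        - (Module.finrank ℂ (LinearMap.ker (adjoint A : H₂ →ₗ[ℂ] H₁)) : ℂ))) := by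
    apply Tendsto.sub
    · exact my_trace_tendsto A B₁ b₁ hB₁ hB₁' h₁
    · exact my_trace_tendsto (adjoint A) B₂ b₂ hB₂c hB₂c' h₂
  have hlim2 : Tendsto E atTop (𝓝 (E 0)) := by
    have : E = fun _ => E 0 := funext hconst
    rw [this]
    exact tendsto_const_nhds
  have hfinal := tendsto_nhds_unique hlim hlim2
  rw [hfinal, hEdef]
  simp only [zero_add, pow_one]
end

section
/- On the algebra of operators of the form p(D_n)^+ + g on L²(ℝ₊), where p is a scalar symbol acting as a Fourier multiplier truncated to ℝ₊ and g is an integral operator with rapidly decreasing kernel (hence trace class), define tr'(p + g) = tr(g). Then for two such operators, tr'([p₁+g₁, p₂+g₂]) = −i ∫_ℝ (∂_{ξ_n} p₁)(ξ_n) p₂(ξ_n) dξ_n = i ∫_ℝ p₁(ξ_n) (∂_{ξ_n} p₂)(ξ_n) dξ_n. -/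
open MeasureTheory

/-- The symbol `p(ξ) = ∫ k(x) e^{-ixξ} dx` of the convolution operator with
kernel `k`; the truncated operator `p(D_n)⁺` on `L²(ℝ₊)` is
`u ↦ (x ↦ ∫_{y>0} k(x-y) u(y) dy)`. -/
noncomputable def symbolOf (k : SchwartzMap ℝ ℂ) (ξ : ℝ) : ℂ :=
  ∫ x : ℝ, k x * Complex.exp (-Complex.I * x * ξ)

/-- The singular Green (smoothing) part of the composition
`(p₁(D_n)⁺ + g₁)(p₂(D_n)⁺ + g₂)` of operators on `L²(ℝ₊)`, where `p_i(D_n)⁺`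
is the truncated convolution by `k_i` and `g_i` is the integral operator with
rapidly decreasing kernel `g_i`: its integral kernel at `(x, y)`, `x, y > 0`,
consists of the leftover term `-L(p₁,p₂)` plus the three compositions
involving `g₁`, `g₂`. -/
noncomputable def greenKernelComp (k₁ : SchwartzMap ℝ ℂ) (g₁ : SchwartzMap (ℝ × ℝ) ℂ)
    (k₂ : SchwartzMap ℝ ℂ) (g₂ : SchwartzMap (ℝ × ℝ) ℂ) (x y : ℝ) : ℂ :=
  (-∫ z in Set.Iio (0 : ℝ), k₁ (x - z) * k₂ (z - y))
    + (∫ z in Set.Ioi (0 : ℝ), k₁ (x - z) * g₂ (z, y))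
    + (∫ z in Set.Ioi (0 : ℝ), g₁ (x, z) * k₂ (z - y))
    + (∫ z in Set.Ioi (0 : ℝ), g₁ (x, z) * g₂ (z, y))

open Real Complex FourierTransform Set Function RealInnerProductSpace

namespace FedosovAux

lemma bound_exists {E : Type*} [NormedAddCommGroup E] [NormedSpace ℝ E]
    (k : SchwartzMap E ℂ) : ∃ C, 0 ≤ C ∧ ∀ x, ‖k x‖ ≤ C := by
  obtain ⟨C, hC0, hC⟩ := k.decay 0 0
  exact ⟨C, hC0.le, fun x => by simpa using hC x⟩

lemma symbolOf_eq (k : SchwartzMap ℝ ℂ) (ξ : ℝ) :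
    symbolOf k ξ = 𝓕 (k : ℝ → ℂ) (ξ / (2 * π)) := by
  rw [Real.fourier_eq']
  unfold symbolOf
  congr 1
  ext x
  rw [smul_eq_mul, mul_comm]
  congr 1
  have h : (-2 * π * (inner ℝ x (ξ / (2 * π)) : ℝ) : ℝ) = -(x * ξ) := by
    simp only [RCLike.inner_apply, conj_trivial]
    field_simp
  rw [h]
  push_cast
  ring_nf

lemma integrable_smul (k : SchwartzMap ℝ ℂ) : Integrable (fun x : ℝ => x • (k x : ℂ)) := by
  refine (k.integrable_pow_mul volume 1).mono' ?_ ?_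
  · exact (continuous_id.smul k.continuous).aestronglyMeasurable
  · exact Filter.Eventually.of_forall fun x => by
      simp [norm_smul, Real.norm_eq_abs]

end FedosovAux

namespace FedosovAux2
open FedosovAux

lemma flip_innerₗ : (innerₗ ℝ).flip = innerₗ ℝ := by
  apply LinearMap.ext; intro v
  apply LinearMap.ext; intro w
  exact real_inner_comm v w

lemma flip_formula {f g : ℝ → ℂ} (hf : Integrable f) (hg : Integrable g) :
    ∫ ξ : ℝ, 𝓕 f ξ * g ξ = ∫ x : ℝ, f x * 𝓕 g x := by
  have := VectorFourier.integral_fourierIntegral_smul_eq_flip (L := innerₗ ℝ)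
    Real.continuous_fourierChar continuous_inner hf hg
  rw [flip_innerₗ] at this
  simp only [smul_eq_mul] at this
  exact this

lemma integrable_fourier (k : SchwartzMap ℝ ℂ) : Integrable (𝓕 (k : ℝ → ℂ)) := by
  have : 𝓕 (k : ℝ → ℂ) = (SchwartzMap.fourierTransformCLM ℝ k : ℝ → ℂ) := by
    rw [SchwartzMap.fourierTransformCLM_apply, SchwartzMap.fourier_coe]
  rw [this]
  exact (SchwartzMap.fourierTransformCLM ℝ k).integrable

lemma double_fourier (k : SchwartzMap ℝ ℂ) (x : ℝ) :
    𝓕 (𝓕 (k : ℝ → ℂ)) x = k (-x) := by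
  have hinv := k.continuous.fourierInv_fourier_eq k.integrable (integrable_fourier k)
  have h1 : 𝓕 (𝓕 (k : ℝ → ℂ)) x = 𝓕⁻ (𝓕 (k : ℝ → ℂ)) (-x) := by
    rw [Real.fourierInv_eq_fourier_neg, neg_neg]
  rw [h1, hinv]

lemma deriv_symbolOf (k : SchwartzMap ℝ ℂ) (ξ : ℝ) :
    deriv (symbolOf k) ξ
      = (2 * π : ℝ)⁻¹ • 𝓕 (fun x : ℝ => (-2 * π * I * x) • (k x : ℂ)) (ξ / (2 * π)) := by
  have h := Real.hasDerivAt_fourier k.integrable (integrable_smul k) (ξ / (2 * π))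
  have hdiv : HasDerivAt (fun η : ℝ => η / (2 * π)) (2 * π)⁻¹ ξ := by
    simpa using (hasDerivAt_id ξ).div_const (2 * π)
  have hcomp := h.scomp ξ hdiv
  have hs : symbolOf k = (𝓕 (k : ℝ → ℂ)) ∘ (fun η : ℝ => η / (2 * π)) := by
    funext η; exact symbolOf_eq k η
  rw [hs]
  exact hcomp.deriv

end FedosovAux2

namespace FedosovAux3
open FedosovAux FedosovAux2

lemma integrable_m (k : SchwartzMap ℝ ℂ) :
    Integrable (fun x : ℝ => (-2 * π * I * x) • (k x : ℂ)) := by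
  have : (fun x : ℝ => (-2 * π * I * x) • (k x : ℂ))
      = fun x : ℝ => (-2 * π * I : ℂ) * (x • (k x : ℂ)) := by
    funext x
    simp only [smul_eq_mul, Complex.real_smul]
    ring
  rw [this]
  exact (integrable_smul k).const_mul _

lemma rhs_core (k₁ k₂ : SchwartzMap ℝ ℂ) :
    ∫ ξ : ℝ, deriv (symbolOf k₁) ξ * symbolOf k₂ ξ
      = ∫ x : ℝ, ((-2 * π * I * x) • (k₁ x : ℂ)) * k₂ (-x) := by
  have step1 : ∀ ξ : ℝ, deriv (symbolOf k₁) ξ * symbolOf k₂ ξ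
      = (fun η : ℝ => (2 * π : ℝ)⁻¹ • (𝓕 (fun x : ℝ => (-2 * π * I * x) • (k₁ x : ℂ)) η
          * 𝓕 (k₂ : ℝ → ℂ) η)) (ξ / (2 * π)) := by
    intro ξ
    rw [deriv_symbolOf, symbolOf_eq, smul_mul_assoc]
  set G : ℝ → ℂ := fun η : ℝ => (2 * π : ℝ)⁻¹ • (𝓕 (fun x : ℝ => (-2 * π * I * x) • (k₁ x : ℂ)) η
          * 𝓕 (k₂ : ℝ → ℂ) η) with hG
  calc ∫ ξ : ℝ, deriv (symbolOf k₁) ξ * symbolOf k₂ ξ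
      = ∫ ξ : ℝ, G (ξ / (2 * π)) := by
        exact integral_congr_ae (Filter.Eventually.of_forall step1)
    _ = |2 * π| • ∫ η : ℝ, G η := MeasureTheory.Measure.integral_comp_div G (2 * π)
    _ = ∫ η : ℝ, 𝓕 (fun x : ℝ => (-2 * π * I * x) • (k₁ x : ℂ)) η * 𝓕 (k₂ : ℝ → ℂ) η := by
        rw [hG]
        rw [integral_smul, smul_smul, abs_of_pos (by positivity),
          mul_inv_cancel₀ (by positivity), one_smul]
    _ = ∫ x : ℝ, ((-2 * π * I * x) • (k₁ x : ℂ)) * 𝓕 (𝓕 (k₂ : ℝ → ℂ)) x :=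
        flip_formula (integrable_m k₁) (integrable_fourier k₂)
    _ = ∫ x : ℝ, ((-2 * π * I * x) • (k₁ x : ℂ)) * k₂ (-x) := by
        exact integral_congr_ae (Filter.Eventually.of_forall fun x => by
          simp only [double_fourier])

lemma rhs_eq₁ (k₁ k₂ : SchwartzMap ℝ ℂ) :
    ∫ ξ : ℝ, deriv (symbolOf k₁) ξ * symbolOf k₂ ξ
      = (-2 * π * I) * ∫ x : ℝ, (x : ℂ) * (k₁ x * k₂ (-x)) := by
  rw [rhs_core, ← MeasureTheory.integral_const_mul]
  exact integral_congr_ae (Filter.Eventually.of_forall fun x => by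
    simp [smul_eq_mul]; ring)

lemma rhs_eq₂ (k₁ k₂ : SchwartzMap ℝ ℂ) :
    ∫ ξ : ℝ, symbolOf k₁ ξ * deriv (symbolOf k₂) ξ
      = (2 * π * I) * ∫ x : ℝ, (x : ℂ) * (k₁ x * k₂ (-x)) := by
  have h : ∫ ξ : ℝ, symbolOf k₁ ξ * deriv (symbolOf k₂) ξ
      = ∫ ξ : ℝ, deriv (symbolOf k₂) ξ * symbolOf k₁ ξ := by
    exact integral_congr_ae (Filter.Eventually.of_forall fun ξ => mul_comm _ _)
  rw [h, rhs_eq₁ k₂ k₁]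
  have hneg : ∫ x : ℝ, (x : ℂ) * (k₂ x * k₁ (-x))
      = ∫ x : ℝ, ((-x : ℝ) : ℂ) * (k₂ (-x) * k₁ (- -x)) :=
    (integral_neg_eq_self (fun x : ℝ => (x : ℂ) * (k₂ x * k₁ (-x))) volume).symm
  rw [hneg]
  rw [show (fun x : ℝ => ((-x : ℝ) : ℂ) * (k₂ (-x) * k₁ (- -x)))
      = fun x : ℝ => -((x : ℂ) * (k₁ x * k₂ (-x))) from funext fun x => by
        push_cast; ring_nf]
  rw [integral_neg]
  ring

namespace FedosovAux4
open FedosovAux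

lemma inner_sub (f g : SchwartzMap ℝ ℂ) (x : ℝ) :
    (∫ z in Set.Iio (0:ℝ), f (x - z) * g (z - x)) = ∫ t in Set.Ioi x, f t * g (-t) := by
  set F : ℝ → ℂ := fun t => f t * g (-t) with hF
  calc (∫ z in Set.Iio (0:ℝ), f (x - z) * g (z - x))
      = ∫ z in Set.Iio (0:ℝ), F (x - z) := by
        refine setIntegral_congr_fun measurableSet_Iio fun z _ => ?_
        rw [hF]; simp only [neg_sub]
    _ = ∫ z, (Set.Iio (0:ℝ)).indicator (fun z => F (x - z)) z :=
        (integral_indicator measurableSet_Iio).symm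
    _ = ∫ t, (Set.Iio (0:ℝ)).indicator (fun z => F (x - z)) (x - t) :=
        (integral_sub_left_eq_self _ volume x).symm
    _ = ∫ t, (Set.Ioi x).indicator F t := by
        congr 1
        funext t
        by_cases ht : x < t
        · rw [Set.indicator_of_mem (by simpa using ht), Set.indicator_of_mem (by simpa using ht)]
          simp
        · rw [Set.indicator_of_notMem (by simpa using ht),
            Set.indicator_of_notMem (by simpa using ht)]
    _ = ∫ t in Set.Ioi x, F t := integral_indicator measurableSet_Ioi

lemma uncurryF_meas {h : ℝ → ℂ} (hc : Continuous h) :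
    AEStronglyMeasurable (Function.uncurry fun x t => (Set.Ioi x).indicator h t)
      ((volume.restrict (Set.Ioi (0:ℝ))).prod volume) := by
  have heq : (Function.uncurry fun x t => (Set.Ioi x).indicator h t)
      = Set.indicator {p : ℝ × ℝ | p.1 < p.2} (fun p => h p.2) := by
    funext p
    rcases p with ⟨x, t⟩
    simp [Function.uncurry, Set.indicator_apply, Set.mem_Ioi]
  rw [heq]
  exact ((hc.comp continuous_snd).aestronglyMeasurable).indicator
    (measurableSet_lt measurable_fst measurable_snd)

lemma uncurryF_int {h : ℝ → ℂ} (hc : Continuous h)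
    (h2 : Integrable (fun t : ℝ => (t : ℂ) * h t)) :
    Integrable (Function.uncurry fun x t => (Set.Ioi x).indicator h t)
      ((volume.restrict (Set.Ioi (0:ℝ))).prod volume) := by
  refine ⟨uncurryF_meas hc, ?_⟩
  rw [hasFiniteIntegral_def]
  calc ∫⁻ p, ‖(Function.uncurry fun x t => (Set.Ioi x).indicator h t) p‖₊
        ∂((volume.restrict (Set.Ioi (0:ℝ))).prod volume)
      = ∫⁻ t, ∫⁻ x, ‖(Set.Ioi x).indicator h t‖₊ ∂(volume.restrict (Set.Ioi (0:ℝ))) ∂volume :=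
        lintegral_prod_symm _ (uncurryF_meas hc).enorm
    _ ≤ ∫⁻ t : ℝ, ‖(t : ℂ) * h t‖₊ ∂volume := ?_
    _ < ⊤ := h2.hasFiniteIntegral
  refine lintegral_mono fun t => ?_
  have hin : ∀ x : ℝ, (‖(Set.Ioi x).indicator h t‖₊ : ENNReal)
      = (Set.Iio t).indicator (fun _ => (‖h t‖₊ : ENNReal)) x := by
    intro x
    by_cases hx : x < t
    · rw [Set.indicator_of_mem (by simpa using hx), Set.indicator_of_mem (by simpa using hx)]
    · rw [Set.indicator_of_notMem (by simpa using hx), Set.indicator_of_notMem (by simpa using hx)]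
      simp
  calc ∫⁻ x, (‖(Set.Ioi x).indicator h t‖₊ : ENNReal) ∂(volume.restrict (Set.Ioi (0:ℝ)))
      = ∫⁻ x, (Set.Iio t).indicator (fun _ => (‖h t‖₊ : ENNReal)) x
          ∂(volume.restrict (Set.Ioi (0:ℝ))) := by
        exact lintegral_congr hin
    _ = (‖h t‖₊ : ENNReal) * volume (Set.Iio t ∩ Set.Ioi 0) := by
        rw [lintegral_indicator measurableSet_Iio, setLIntegral_const,
          Measure.restrict_apply measurableSet_Iio]
    _ ≤ ‖(t : ℂ) * h t‖₊ := ?_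
  rw [Set.inter_comm, Set.Ioi_inter_Iio]
  have : volume (Set.Ioo (0:ℝ) t) = ENNReal.ofReal t := by
    rw [Real.volume_Ioo, sub_zero]
  rw [this, nnnorm_mul]
  push_cast
  rw [mul_comm]
  refine mul_le_mul_left ?_ _
  have h1 : ENNReal.ofReal t ≤ ENNReal.ofReal |t| := ENNReal.ofReal_le_ofReal (le_abs_self t)
  refine h1.trans ?_
  have h2 : (|t| : ℝ) = ‖(t : ℂ)‖ := by simp
  rw [h2, ofReal_norm, enorm_eq_nnnorm]

lemma layer {h : ℝ → ℂ} (hc : Continuous h)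
    (h2 : Integrable (fun t : ℝ => (t : ℂ) * h t)) :
    ∫ x in Set.Ioi (0:ℝ), (∫ t in Set.Ioi x, h t) = ∫ t in Set.Ioi (0:ℝ), (t : ℂ) * h t := by
  have hswap := integral_integral_swap (f := fun x t => (Set.Ioi x).indicator h t)
    (uncurryF_int hc h2)
  calc ∫ x in Set.Ioi (0:ℝ), (∫ t in Set.Ioi x, h t)
      = ∫ x in Set.Ioi (0:ℝ), ∫ t, (Set.Ioi x).indicator h t := by
        refine integral_congr_ae (Filter.Eventually.of_forall fun x => ?_)
        show (∫ t in Set.Ioi x, h t) = ∫ t, (Set.Ioi x).indicator h t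
        exact (integral_indicator measurableSet_Ioi).symm
    _ = ∫ t, ∫ x in Set.Ioi (0:ℝ), (Set.Ioi x).indicator h t := hswap
    _ = ∫ t, (Set.Ioi (0:ℝ)).indicator (fun t => (t : ℂ) * h t) t := by
        refine integral_congr_ae (Filter.Eventually.of_forall fun t => ?_)
        show (∫ x in Set.Ioi (0:ℝ), (Set.Ioi x).indicator h t)
            = (Set.Ioi (0:ℝ)).indicator (fun t => (t : ℂ) * h t) t
        have hin : ∀ x : ℝ, (Set.Ioi x).indicator h t
            = (Set.Iio t).indicator (fun _ => h t) x := by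
          intro x
          by_cases hx : x < t
          · rw [Set.indicator_of_mem (by simpa using hx), Set.indicator_of_mem (by simpa using hx)]
          · rw [Set.indicator_of_notMem (by simpa using hx),
              Set.indicator_of_notMem (by simpa using hx)]
        rw [integral_congr_ae (Filter.Eventually.of_forall hin),
          integral_indicator measurableSet_Iio, setIntegral_const,
          measureReal_restrict_apply measurableSet_Iio]
        by_cases ht : 0 < t
        · rw [Set.indicator_of_mem (by simpa using ht), Set.inter_comm, Set.Ioi_inter_Iio,
            Real.volume_real_Ioo, sub_zero, max_eq_left ht.le, Complex.real_smul]
        · rw [Set.indicator_of_notMem (by simpa using ht)]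
          have : Set.Iio t ∩ Set.Ioi (0:ℝ) = ∅ := by
            rw [Set.inter_comm, Set.Ioi_inter_Iio]
            exact Set.Ioo_eq_empty (by simpa using ht)
          rw [this]
          simp
    _ = ∫ t in Set.Ioi (0:ℝ), (t : ℂ) * h t := integral_indicator measurableSet_Ioi

lemma layer_integrable {h : ℝ → ℂ} (hc : Continuous h)
    (h2 : Integrable (fun t : ℝ => (t : ℂ) * h t)) :
    Integrable (fun x => ∫ t in Set.Ioi x, h t) (volume.restrict (Set.Ioi (0:ℝ))) := by
  have := (uncurryF_int hc h2).integral_prod_left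
  refine this.congr (Filter.Eventually.of_forall fun x => ?_)
  exact integral_indicator measurableSet_Ioi

lemma h_cont (k₁ k₂ : SchwartzMap ℝ ℂ) : Continuous (fun t : ℝ => (k₁ t : ℂ) * k₂ (-t)) :=
  k₁.continuous.mul (k₂.continuous.comp continuous_neg)

lemma h_int (k₁ k₂ : SchwartzMap ℝ ℂ) : Integrable (fun t : ℝ => (k₁ t : ℂ) * k₂ (-t)) := by
  obtain ⟨C, hC0, hC⟩ := bound_exists k₂
  refine (k₁.integrable (μ := volume)).norm.const_mul C |>.mono'
    (h_cont k₁ k₂).aestronglyMeasurable ?_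
  refine Filter.Eventually.of_forall fun t => ?_
  rw [norm_mul]
  exact (mul_le_mul_of_nonneg_left (hC (-t)) (norm_nonneg _)).trans (by rw [mul_comm])

lemma th_int (k₁ k₂ : SchwartzMap ℝ ℂ) :
    Integrable (fun t : ℝ => (t : ℂ) * ((k₁ t : ℂ) * k₂ (-t))) := by
  obtain ⟨C, hC0, hC⟩ := bound_exists k₂
  refine ((k₁.integrable_pow_mul volume 1).const_mul C).mono'
    ((continuous_ofReal.mul (h_cont k₁ k₂)).aestronglyMeasurable) ?_
  refine Filter.Eventually.of_forall fun t => ?_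
  rw [norm_mul, norm_mul]
  have h1 : ‖(t : ℂ)‖ = ‖t‖ := by simp
  rw [h1]
  calc ‖t‖ * (‖(k₁ t : ℂ)‖ * ‖(k₂ (-t) : ℂ)‖)
      ≤ ‖t‖ * (‖(k₁ t : ℂ)‖ * C) := by
        refine mul_le_mul_of_nonneg_left (mul_le_mul_of_nonneg_left (hC (-t)) (norm_nonneg _))
          (norm_nonneg _)
    _ = C * (‖t‖ ^ 1 * ‖(k₁ t : ℂ)‖) := by ring

noncomputable abbrev μp : Measure ℝ := volume.restrict (Set.Ioi (0:ℝ))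

lemma prod_eq : (μp.prod μp) = (volume : Measure (ℝ × ℝ)).restrict (Set.Ioi (0:ℝ) ×ˢ Set.Ioi (0:ℝ)) := by
  rw [Measure.volume_eq_prod, Measure.prod_restrict]

lemma integrable_g_restrict (g : SchwartzMap (ℝ × ℝ) ℂ) :
    Integrable (fun p : ℝ × ℝ => (g p : ℂ)) (μp.prod μp) := by
  rw [prod_eq]
  exact g.integrable.restrict

lemma integrable_g_swap_restrict (g : SchwartzMap (ℝ × ℝ) ℂ) :
    Integrable (fun p : ℝ × ℝ => (g (p.2, p.1) : ℂ)) (μp.prod μp) := by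
  rw [prod_eq]
  refine Integrable.restrict ?_
  have h1 : Integrable (fun p : ℝ × ℝ => (g p : ℂ)) (volume : Measure (ℝ × ℝ)) := g.integrable
  rw [Measure.volume_eq_prod] at h1 ⊢
  exact h1.swap

lemma integrable_cross₁ (k : SchwartzMap ℝ ℂ) (g : SchwartzMap (ℝ × ℝ) ℂ) :
    Integrable (Function.uncurry fun x z : ℝ => (k (x - z) : ℂ) * g (z, x)) (μp.prod μp) := by
  obtain ⟨C, hC0, hC⟩ := bound_exists k
  refine ((integrable_g_swap_restrict g).norm.const_mul C).mono' ?_ ?_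
  · exact ((k.continuous.comp (continuous_fst.sub continuous_snd)).mul
      (g.continuous.comp (continuous_snd.prodMk continuous_fst))).aestronglyMeasurable
  · refine Filter.Eventually.of_forall fun p => ?_
    rw [Function.uncurry]
    rw [norm_mul]
    exact mul_le_mul_of_nonneg_right (hC _) (norm_nonneg _)

lemma integrable_cross₂ (g : SchwartzMap (ℝ × ℝ) ℂ) (k : SchwartzMap ℝ ℂ) :
    Integrable (Function.uncurry fun x z : ℝ => (g (x, z) : ℂ) * k (z - x)) (μp.prod μp) := by
  obtain ⟨C, hC0, hC⟩ := bound_exists k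
  refine ((integrable_g_restrict g).norm.const_mul C).mono' ?_ ?_
  · exact ((g.continuous.comp (continuous_fst.prodMk continuous_snd)).mul
      (k.continuous.comp (continuous_snd.sub continuous_fst))).aestronglyMeasurable
  · refine Filter.Eventually.of_forall fun p => ?_
    rw [Function.uncurry]
    rw [norm_mul, mul_comm ‖(g (p.1, p.2) : ℂ)‖]
    exact mul_le_mul_of_nonneg_right (hC _) (norm_nonneg _)

lemma integrable_cross₃ (g₁ g₂ : SchwartzMap (ℝ × ℝ) ℂ) :
    Integrable (Function.uncurry fun x z : ℝ => (g₁ (x, z) : ℂ) * g₂ (z, x)) (μp.prod μp) := by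
  obtain ⟨C, hC0, hC⟩ := bound_exists g₁
  refine ((integrable_g_swap_restrict g₂).norm.const_mul C).mono' ?_ ?_
  · exact ((g₁.continuous.comp (continuous_fst.prodMk continuous_snd)).mul
      (g₂.continuous.comp (continuous_snd.prodMk continuous_fst))).aestronglyMeasurable
  · refine Filter.Eventually.of_forall fun p => ?_
    rw [Function.uncurry]
    rw [norm_mul]
    exact mul_le_mul_of_nonneg_right (hC _) (norm_nonneg _)

lemma swap_double {φ : ℝ → ℝ → ℂ} (hφ : Integrable (Function.uncurry φ) (μp.prod μp)) :
    ∫ x in Set.Ioi (0:ℝ), ∫ z in Set.Ioi (0:ℝ), φ x z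
      = ∫ x in Set.Ioi (0:ℝ), ∫ z in Set.Ioi (0:ℝ), φ z x :=
  integral_integral_swap hφ

lemma green_trace (k₁ k₂ : SchwartzMap ℝ ℂ) (g₁ g₂ : SchwartzMap (ℝ × ℝ) ℂ) :
    ∫ x in Set.Ioi (0:ℝ), greenKernelComp k₁ g₁ k₂ g₂ x x
      = (-∫ t in Set.Ioi (0:ℝ), (t : ℂ) * (k₁ t * k₂ (-t)))
        + ((∫ x in Set.Ioi (0:ℝ), ∫ z in Set.Ioi (0:ℝ), (k₁ (x - z) : ℂ) * g₂ (z, x))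
          + (∫ x in Set.Ioi (0:ℝ), ∫ z in Set.Ioi (0:ℝ), (g₁ (x, z) : ℂ) * k₂ (z - x))
          + (∫ x in Set.Ioi (0:ℝ), ∫ z in Set.Ioi (0:ℝ), (g₁ (x, z) : ℂ) * g₂ (z, x))) := by
  have hpt : ∀ x : ℝ, greenKernelComp k₁ g₁ k₂ g₂ x x
      = (-∫ t in Set.Ioi x, (k₁ t : ℂ) * k₂ (-t))
        + (∫ z in Set.Ioi (0:ℝ), (k₁ (x - z) : ℂ) * g₂ (z, x))
        + (∫ z in Set.Ioi (0:ℝ), (g₁ (x, z) : ℂ) * k₂ (z - x))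
        + (∫ z in Set.Ioi (0:ℝ), (g₁ (x, z) : ℂ) * g₂ (z, x)) := by
    intro x
    unfold greenKernelComp
    rw [inner_sub k₁ k₂ x]
  have h1 : Integrable (fun x => ∫ t in Set.Ioi x, (k₁ t : ℂ) * k₂ (-t)) μp :=
    layer_integrable (h_cont k₁ k₂) (th_int k₁ k₂)
  have h2 : Integrable (fun x => ∫ z in Set.Ioi (0:ℝ), (k₁ (x - z) : ℂ) * g₂ (z, x)) μp :=
    (integrable_cross₁ k₁ g₂).integral_prod_left
  have h3 : Integrable (fun x => ∫ z in Set.Ioi (0:ℝ), (g₁ (x, z) : ℂ) * k₂ (z - x)) μp :=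
    (integrable_cross₂ g₁ k₂).integral_prod_left
  have h4 : Integrable (fun x => ∫ z in Set.Ioi (0:ℝ), (g₁ (x, z) : ℂ) * g₂ (z, x)) μp :=
    (integrable_cross₃ g₁ g₂).integral_prod_left
  rw [integral_congr_ae (Filter.Eventually.of_forall hpt)]
  have e1 : ∫ x in Set.Ioi (0:ℝ), ((((-∫ t in Set.Ioi x, (k₁ t : ℂ) * k₂ (-t))
        + ∫ z in Set.Ioi (0:ℝ), (k₁ (x - z) : ℂ) * g₂ (z, x))
        + ∫ z in Set.Ioi (0:ℝ), (g₁ (x, z) : ℂ) * k₂ (z - x))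
        + ∫ z in Set.Ioi (0:ℝ), (g₁ (x, z) : ℂ) * g₂ (z, x))
      = ((∫ x in Set.Ioi (0:ℝ), (((-∫ t in Set.Ioi x, (k₁ t : ℂ) * k₂ (-t))
        + ∫ z in Set.Ioi (0:ℝ), (k₁ (x - z) : ℂ) * g₂ (z, x))
        + ∫ z in Set.Ioi (0:ℝ), (g₁ (x, z) : ℂ) * k₂ (z - x)))
        + ∫ x in Set.Ioi (0:ℝ), ∫ z in Set.Ioi (0:ℝ), (g₁ (x, z) : ℂ) * g₂ (z, x)) :=
    integral_add ((h1.neg.add h2).add h3) h4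
  have e2 : ∫ x in Set.Ioi (0:ℝ), (((-∫ t in Set.Ioi x, (k₁ t : ℂ) * k₂ (-t))
        + ∫ z in Set.Ioi (0:ℝ), (k₁ (x - z) : ℂ) * g₂ (z, x))
        + ∫ z in Set.Ioi (0:ℝ), (g₁ (x, z) : ℂ) * k₂ (z - x))
      = ((∫ x in Set.Ioi (0:ℝ), ((-∫ t in Set.Ioi x, (k₁ t : ℂ) * k₂ (-t))
        + ∫ z in Set.Ioi (0:ℝ), (k₁ (x - z) : ℂ) * g₂ (z, x)))
        + ∫ x in Set.Ioi (0:ℝ), ∫ z in Set.Ioi (0:ℝ), (g₁ (x, z) : ℂ) * k₂ (z - x)) :=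
    integral_add (h1.neg.add h2) h3
  have e3 : ∫ x in Set.Ioi (0:ℝ), ((-∫ t in Set.Ioi x, (k₁ t : ℂ) * k₂ (-t))
        + ∫ z in Set.Ioi (0:ℝ), (k₁ (x - z) : ℂ) * g₂ (z, x))
      = ((∫ x in Set.Ioi (0:ℝ), (-∫ t in Set.Ioi x, (k₁ t : ℂ) * k₂ (-t)))
        + ∫ x in Set.Ioi (0:ℝ), ∫ z in Set.Ioi (0:ℝ), (k₁ (x - z) : ℂ) * g₂ (z, x)) :=
    integral_add h1.neg h2
  have e4 : (∫ x in Set.Ioi (0:ℝ), (-∫ t in Set.Ioi x, (k₁ t : ℂ) * k₂ (-t)))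
      = -∫ x in Set.Ioi (0:ℝ), ∫ t in Set.Ioi x, (k₁ t : ℂ) * k₂ (-t) :=
    integral_neg _
  rw [e1, e2, e3, e4, layer (h_cont k₁ k₂) (th_int k₁ k₂)]
  ring

lemma green_integrable (k₁ k₂ : SchwartzMap ℝ ℂ) (g₁ g₂ : SchwartzMap (ℝ × ℝ) ℂ) :
    Integrable (fun x => greenKernelComp k₁ g₁ k₂ g₂ x x) μp := by
  have hpt : ∀ x : ℝ, greenKernelComp k₁ g₁ k₂ g₂ x x
      = (-∫ t in Set.Ioi x, (k₁ t : ℂ) * k₂ (-t))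
        + (∫ z in Set.Ioi (0:ℝ), (k₁ (x - z) : ℂ) * g₂ (z, x))
        + (∫ z in Set.Ioi (0:ℝ), (g₁ (x, z) : ℂ) * k₂ (z - x))
        + (∫ z in Set.Ioi (0:ℝ), (g₁ (x, z) : ℂ) * g₂ (z, x)) := by
    intro x
    unfold greenKernelComp
    rw [inner_sub k₁ k₂ x]
  have h1 : Integrable (fun x => ∫ t in Set.Ioi x, (k₁ t : ℂ) * k₂ (-t)) μp :=
    layer_integrable (h_cont k₁ k₂) (th_int k₁ k₂)
  have h2 : Integrable (fun x => ∫ z in Set.Ioi (0:ℝ), (k₁ (x - z) : ℂ) * g₂ (z, x)) μp :=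
    (integrable_cross₁ k₁ g₂).integral_prod_left
  have h3 : Integrable (fun x => ∫ z in Set.Ioi (0:ℝ), (g₁ (x, z) : ℂ) * k₂ (z - x)) μp :=
    (integrable_cross₂ g₁ k₂).integral_prod_left
  have h4 : Integrable (fun x => ∫ z in Set.Ioi (0:ℝ), (g₁ (x, z) : ℂ) * g₂ (z, x)) μp :=
    (integrable_cross₃ g₁ g₂).integral_prod_left
  exact (((h1.neg.add h2).add h3).add h4).congr
    (Filter.Eventually.of_forall fun x => (hpt x).symm)

lemma lhs_eq (k₁ k₂ : SchwartzMap ℝ ℂ) (g₁ g₂ : SchwartzMap (ℝ × ℝ) ℂ) :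
    (∫ x in Set.Ioi (0:ℝ),
        (greenKernelComp k₁ g₁ k₂ g₂ x x - greenKernelComp k₂ g₂ k₁ g₁ x x))
      = -∫ t : ℝ, (t : ℂ) * (k₁ t * k₂ (-t)) := by
  rw [integral_sub (green_integrable k₁ k₂ g₁ g₂) (green_integrable k₂ k₁ g₂ g₁),
    green_trace k₁ k₂ g₁ g₂, green_trace k₂ k₁ g₂ g₁]
  have hY₁ : (∫ x in Set.Ioi (0:ℝ), ∫ z in Set.Ioi (0:ℝ), (k₂ (x - z) : ℂ) * g₁ (z, x))
      = ∫ x in Set.Ioi (0:ℝ), ∫ z in Set.Ioi (0:ℝ), (g₁ (x, z) : ℂ) * k₂ (z - x) := by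
    rw [swap_double (integrable_cross₁ k₂ g₁)]
    refine integral_congr_ae (Filter.Eventually.of_forall fun x => ?_)
    exact integral_congr_ae (Filter.Eventually.of_forall fun z => mul_comm _ _)
  have hY₂ : (∫ x in Set.Ioi (0:ℝ), ∫ z in Set.Ioi (0:ℝ), (g₂ (x, z) : ℂ) * k₁ (z - x))
      = ∫ x in Set.Ioi (0:ℝ), ∫ z in Set.Ioi (0:ℝ), (k₁ (x - z) : ℂ) * g₂ (z, x) := by
    rw [swap_double (integrable_cross₂ g₂ k₁)]
    refine integral_congr_ae (Filter.Eventually.of_forall fun x => ?_)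
    exact integral_congr_ae (Filter.Eventually.of_forall fun z => mul_comm _ _)
  have hY₃ : (∫ x in Set.Ioi (0:ℝ), ∫ z in Set.Ioi (0:ℝ), (g₂ (x, z) : ℂ) * g₁ (z, x))
      = ∫ x in Set.Ioi (0:ℝ), ∫ z in Set.Ioi (0:ℝ), (g₁ (x, z) : ℂ) * g₂ (z, x) := by
    rw [swap_double (integrable_cross₃ g₂ g₁)]
    refine integral_congr_ae (Filter.Eventually.of_forall fun x => ?_)
    exact integral_congr_ae (Filter.Eventually.of_forall fun z => mul_comm _ _)
  rw [hY₁, hY₂, hY₃]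
  have hP₂ : (∫ t in Set.Ioi (0:ℝ), (t : ℂ) * (k₂ t * k₁ (-t)))
      = -∫ t in Set.Iic (0:ℝ), (t : ℂ) * (k₁ t * k₂ (-t)) := by
    have hneg := integral_comp_neg_Ioi (0:ℝ) (fun s => (s : ℂ) * (k₁ s * k₂ (-s)))
    have hpt : ∀ t : ℝ, (t : ℂ) * (k₂ t * k₁ (-t))
        = -((fun s : ℝ => (s : ℂ) * (k₁ s * k₂ (-s))) (-t)) := by
      intro t
      push_cast
      ring_nf
    rw [integral_congr_ae (Filter.Eventually.of_forall hpt), integral_neg, hneg, neg_zero]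
  have hsplit : (∫ t in Set.Iic (0:ℝ), (t : ℂ) * (k₁ t * k₂ (-t)))
      + ∫ t in Set.Ioi (0:ℝ), (t : ℂ) * (k₁ t * k₂ (-t))
      = ∫ t : ℝ, (t : ℂ) * (k₁ t * k₂ (-t)) :=
    intervalIntegral.integral_Iic_add_Ioi (th_int k₁ k₂).integrableOn (th_int k₁ k₂).integrableOn
  rw [← hsplit, hP₂]
  ring

end FedosovAux4
end FedosovAux3

/-- Fedosov's commutator identity: with `tr'(p + g) = tr(g)` picking out the trace
of the singular Green part (the integral of its kernel along the diagonal),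
`tr' ([p₁+g₁, p₂+g₂]) = -i ∫ ∂_{ξ} p₁ · p₂ d̄ξ = i ∫ p₁ · ∂_{ξ} p₂ d̄ξ`,
where `d̄ξ = dξ/(2π)`. -/
theorem fedosov_commutator_trace_identity (k₁ k₂ : SchwartzMap ℝ ℂ)
    (g₁ g₂ : SchwartzMap (ℝ × ℝ) ℂ) :
    (∫ x in Set.Ioi (0 : ℝ),
        (greenKernelComp k₁ g₁ k₂ g₂ x x - greenKernelComp k₂ g₂ k₁ g₁ x x)) =
      -Complex.I * (1 / (2 * Real.pi)) *
        ∫ ξ : ℝ, deriv (symbolOf k₁) ξ * symbolOf k₂ ξ ∧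
    (∫ x in Set.Ioi (0 : ℝ),
        (greenKernelComp k₁ g₁ k₂ g₂ x x - greenKernelComp k₂ g₂ k₁ g₁ x x)) =
      Complex.I * (1 / (2 * Real.pi)) *
        ∫ ξ : ℝ, symbolOf k₁ ξ * deriv (symbolOf k₂) ξ := by
  have hπ : ((Real.pi : ℂ)) ≠ 0 := by exact_mod_cast Real.pi_ne_zero
  have hc₁ : -Complex.I * (1 / (2 * (Real.pi : ℂ))) * (-2 * (Real.pi : ℂ) * Complex.I) = -1 := by
    rw [show -Complex.I * (1 / (2 * (Real.pi : ℂ))) * (-2 * (Real.pi : ℂ) * Complex.I) = Complex.I * Complex.I * ((2 * (Real.pi : ℂ)) * (2 * (Real.pi : ℂ))⁻¹) by ring, mul_inv_cancel₀ (mul_ne_zero two_ne_zero hπ), Complex.I_mul_I]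
    ring
  have hc₂ : Complex.I * (1 / (2 * (Real.pi : ℂ))) * (2 * (Real.pi : ℂ) * Complex.I) = -1 := by
    rw [show Complex.I * (1 / (2 * (Real.pi : ℂ))) * (2 * (Real.pi : ℂ) * Complex.I) = Complex.I * Complex.I * ((2 * (Real.pi : ℂ)) * (2 * (Real.pi : ℂ))⁻¹) by ring, mul_inv_cancel₀ (mul_ne_zero two_ne_zero hπ), Complex.I_mul_I]
    ring
  constructor
  · rw [FedosovAux3.FedosovAux4.lhs_eq k₁ k₂ g₁ g₂, FedosovAux3.rhs_eq₁ k₁ k₂]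
    calc -∫ t : ℝ, (t : ℂ) * (k₁ t * k₂ (-t))
        = (-Complex.I * (1 / (2 * (Real.pi : ℂ))) * (-2 * (Real.pi : ℂ) * Complex.I))
            * ∫ t : ℝ, (t : ℂ) * (k₁ t * k₂ (-t)) := by rw [hc₁]; ring
      _ = -Complex.I * (1 / (2 * (Real.pi : ℂ)))
            * (-2 * (Real.pi : ℂ) * Complex.I * ∫ t : ℝ, (t : ℂ) * (k₁ t * k₂ (-t))) := by ring
  · rw [FedosovAux3.FedosovAux4.lhs_eq k₁ k₂ g₁ g₂, FedosovAux3.rhs_eq₂ k₁ k₂]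
    calc -∫ t : ℝ, (t : ℂ) * (k₁ t * k₂ (-t))
        = (Complex.I * (1 / (2 * (Real.pi : ℂ))) * (2 * (Real.pi : ℂ) * Complex.I))
            * ∫ t : ℝ, (t : ℂ) * (k₁ t * k₂ (-t)) := by rw [hc₂]; ring
      _ = Complex.I * (1 / (2 * (Real.pi : ℂ)))
            * (2 * (Real.pi : ℂ) * Complex.I * ∫ t : ℝ, (t : ℂ) * (k₁ t * k₂ (-t))) := by ring
end

section
/- Let A : H₁ → H₂ be a bounded Fredholm operator between Hilbert spaces with closed range. Then the family t ↦ Gr(tA) of graph projections, t ∈ [1,∞), is norm-continuous, and as t → ∞, Gr(tA) converges in operator norm to the diagonal projection diag(π_{ker A}, 1 − π_{ker A*}). -/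
open ContinuousLinearMap
open scoped InnerProductSpace

set_option linter.unusedSectionVars false
set_option linter.unnecessarySimpa false
set_option linter.unreachableTactic false
set_option linter.unusedTactic false

open ContinuousLinearMap
open scoped InnerProductSpace

section Aux

variable {E F : Type*}
  [NormedAddCommGroup E] [InnerProductSpace ℂ E] [CompleteSpace E]
  [NormedAddCommGroup F] [InnerProductSpace ℂ F] [CompleteSpace F]

lemma blockOpAux_decomp (K : Submodule ℂ E) [CompleteSpace K] (P : E →L[ℂ] E)
    (hPK : ∀ x ∈ K, P x = x) (hPKo : ∀ x ∈ Kᗮ, P x = 0) :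
    ∀ x : E, P x ∈ K ∧ x - P x ∈ Kᗮ := by
  intro x
  obtain ⟨y, hy, z, hz, hxyz⟩ := K.exists_add_mem_mem_orthogonal x
  have hPx : P x = y := by rw [hxyz, map_add, hPK y hy, hPKo z hz, add_zero]
  refine ⟨hPx ▸ hy, ?_⟩
  rw [hPx, hxyz]
  simpa using hz


lemma coreT_apply (A : E →L[ℂ] F) (t : ℝ) (v : E) :
    (1 + (t ^ 2 : ℂ) • (adjoint A ∘L A)) v = v + (t ^ 2 : ℂ) • adjoint A (A v) := by
  simp

lemma coreT_re (A : E →L[ℂ] F) (t : ℝ) (v : E) :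
    (⟪(1 + (t ^ 2 : ℂ) • (adjoint A ∘L A)) v, v⟫_ℂ).re = ‖v‖ ^ 2 + t ^ 2 * ‖A v‖ ^ 2 := by
  rw [coreT_apply]
  simp [inner_add_left, inner_smul_left, adjoint_inner_left, inner_self_eq_norm_sq_to_K]
  norm_num [← Complex.ofReal_pow]
  ring

lemma coreT_sa (A : E →L[ℂ] F) (t : ℝ) (x y : E) :
    ⟪(1 + (t ^ 2 : ℂ) • (adjoint A ∘L A)) x, y⟫_ℂ = ⟪x, (1 + (t ^ 2 : ℂ) • (adjoint A ∘L A)) y⟫_ℂ := by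
  rw [coreT_apply, coreT_apply]
  simp [inner_add_left, inner_add_right, inner_smul_left, inner_smul_right,
    adjoint_inner_left, adjoint_inner_right]
  ring

set_option maxHeartbeats 1000000 in
lemma core (A : E →L[ℂ] F) (B : ℝ → E →L[ℂ] E)
    (hB : ∀ t : ℝ, B t ∘L (1 + (t ^ 2 : ℂ) • (adjoint A ∘L A)) = 1)
    (hB' : ∀ t : ℝ, (1 + (t ^ 2 : ℂ) • (adjoint A ∘L A)) ∘L B t = 1)
    (P : E →L[ℂ] E)
    (hP : ∀ x : E, P x ∈ LinearMap.ker (A : E →ₗ[ℂ] F) ∧ x - P x ∈ (LinearMap.ker (A : E →ₗ[ℂ] F) : Submodule ℂ E)ᗮ)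
    (c : ℝ) (hc : 0 < c)
    (hlow : ∀ x ∈ (LinearMap.ker (A : E →ₗ[ℂ] F) : Submodule ℂ E)ᗮ, c * ‖x‖ ≤ ‖A x‖) :
    (Continuous B) ∧
    (∀ t : ℝ, 1 ≤ t → ‖B t - P‖ ≤ 1 / (c ^ 2 * t ^ 2)) ∧
    (∀ t : ℝ, 1 ≤ t → ‖(t : ℂ) • (A ∘L B t)‖ ≤ 1 / (c * t)) := by
  set T : ℝ → E →L[ℂ] E := fun t => 1 + (t ^ 2 : ℂ) • (adjoint A ∘L A) with hT
  have hTB : ∀ (t : ℝ) (z : E), T t (B t z) = z := by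
    intro t z
    rw [show T t (B t z) = (T t ∘L B t) z from rfl, hB' t]; rfl
  have hBT : ∀ (t : ℝ) (z : E), B t (T t z) = z := by
    intro t z
    rw [show B t (T t z) = (B t ∘L T t) z from rfl, hB t]; rfl
  -- norm bound for B
  have hTlow : ∀ (t : ℝ) (v : E), ‖v‖ ≤ ‖T t v‖ := by
    intro t v
    have h1 : ‖v‖ ^ 2 + t ^ 2 * ‖A v‖ ^ 2 ≤ ‖T t v‖ * ‖v‖ := by
      rw [← coreT_re A t v]
      exact re_inner_le_norm (𝕜 := ℂ) _ _
    nlinarith [norm_nonneg v, norm_nonneg (T t v), sq_nonneg (t * ‖A v‖), sq_nonneg (‖v‖ - ‖T t v‖)]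
  have hBnorm : ∀ (t : ℝ) (z : E), ‖B t z‖ ≤ ‖z‖ := by
    intro t z
    have := hTlow t (B t z)
    rwa [hTB] at this
  -- T, B fix ker A
  have hTK : ∀ (t : ℝ) (k : E), k ∈ LinearMap.ker (A : E →ₗ[ℂ] F) → T t k = k := by
    intro t k hk
    have hk' : A k = 0 := hk
    rw [hT]; simp [coreT_apply, hk']
  have hBK : ∀ (t : ℝ) (k : E), k ∈ LinearMap.ker (A : E →ₗ[ℂ] F) → B t k = k := by
    intro t k hk
    conv_lhs => rw [← hTK t k hk]
    exact hBT t k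
  -- B maps (ker A)ᗮ into itself
  have hBmem : ∀ (t : ℝ) (x : E), x ∈ (LinearMap.ker (A : E →ₗ[ℂ] F) : Submodule ℂ E)ᗮ →
      B t x ∈ (LinearMap.ker (A : E →ₗ[ℂ] F) : Submodule ℂ E)ᗮ := by
    intro t x hx
    rw [Submodule.mem_orthogonal]
    intro k hk
    have : ⟪k, B t x⟫_ℂ = ⟪T t k, B t x⟫_ℂ := by rw [hTK t k hk]
    rw [this, coreT_sa, hTB]
    exact (Submodule.mem_orthogonal _ _).1 hx k hk
  -- main estimate
  have hest : ∀ (t : ℝ) (u : E), u ∈ (LinearMap.ker (A : E →ₗ[ℂ] F) : Submodule ℂ E)ᗮ →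
      (1 + c ^ 2 * t ^ 2) * ‖B t u‖ ^ 2 ≤ ‖u‖ * ‖B t u‖ ∧
      t ^ 2 * ‖A (B t u)‖ ^ 2 ≤ ‖u‖ * ‖B t u‖ := by
    intro t u hu
    set v := B t u with hv
    have h1 : ‖v‖ ^ 2 + t ^ 2 * ‖A v‖ ^ 2 = (⟪u, v⟫_ℂ).re := by
      rw [← coreT_re A t v, hv, hTB]
    have h2 : (⟪u, v⟫_ℂ).re ≤ ‖u‖ * ‖v‖ := re_inner_le_norm (𝕜 := ℂ) _ _
    have h3 : c * ‖v‖ ≤ ‖A v‖ := hlow v (hBmem t u hu)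
    constructor
    · have h4 : (c * ‖v‖) * (c * ‖v‖) ≤ ‖A v‖ * ‖A v‖ :=
        mul_self_le_mul_self (by positivity) h3
      nlinarith [sq_nonneg t, sq_nonneg (t * c * ‖v‖),  sq_nonneg t, h4]
    · nlinarith [norm_nonneg v]
  have hBn : ∀ t : ℝ, ‖B t‖ ≤ 1 := fun t =>
    opNorm_le_bound _ zero_le_one fun z => by simpa using hBnorm t z
  have hPdec : ∀ x : E, ‖x - P x‖ ≤ ‖x‖ := by
    intro x
    have h0 : (⟪P x, x - P x⟫_ℂ).re = 0 := by
      rw [(Submodule.mem_orthogonal _ _).1 (hP x).2 (P x) (hP x).1]; simp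
    have h1 : ‖P x + (x - P x)‖ ^ 2 = ‖P x‖ ^ 2 + 2 * (⟪P x, x - P x⟫_ℂ).re + ‖x - P x‖ ^ 2 := by
      have := norm_add_sq (𝕜 := ℂ) (P x) (x - P x)
      simpa only [RCLike.re_to_complex] using this
    have h2 : P x + (x - P x) = x := by abel
    rw [h2, h0] at h1
    nlinarith [norm_nonneg (P x), norm_nonneg (x - P x), norm_nonneg x]
  -- the key quantitative bounds
  have key : ∀ (t : ℝ) (u : E), u ∈ (LinearMap.ker (A : E →ₗ[ℂ] F) : Submodule ℂ E)ᗮ → 1 ≤ t →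
      ‖B t u‖ * (c ^ 2 * t ^ 2) ≤ ‖u‖ ∧ (t * ‖A (B t u)‖) * (c * t) ≤ ‖u‖ := by
    intro t u hu ht
    set v := B t u with hv
    rcases eq_or_lt_of_le (norm_nonneg v) with h0 | h0
    · have hv0 : v = 0 := norm_eq_zero.1 h0.symm
      constructor
      · rw [← h0]; simpa using norm_nonneg u
      · rw [hv0]; simpa using norm_nonneg u
    · have h7 := (hest t u hu).1
      have h8 := (hest t u hu).2
      have hv1 : (1 + c ^ 2 * t ^ 2) * ‖v‖ ≤ ‖u‖ := by nlinarith [h7, h0]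
      have hfirst : ‖v‖ * (c ^ 2 * t ^ 2) ≤ ‖u‖ := by nlinarith [hv1, h0]
      refine ⟨hfirst, ?_⟩
      have e1 : c ^ 2 * t ^ 2 * (t ^ 2 * ‖A v‖ ^ 2) ≤ c ^ 2 * t ^ 2 * (‖u‖ * ‖v‖) :=
        mul_le_mul_of_nonneg_left h8 (by positivity)
      have e2 : ‖u‖ * (‖v‖ * (c ^ 2 * t ^ 2)) ≤ ‖u‖ * ‖u‖ :=
        mul_le_mul_of_nonneg_left hfirst (norm_nonneg u)
      have hsq : ((t * ‖A v‖) * (c * t)) ^ 2 ≤ ‖u‖ ^ 2 := by nlinarith [e1, e2]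
      nlinarith [hsq, norm_nonneg u, mul_nonneg (mul_nonneg (by positivity : (0:ℝ) ≤ t)
        (norm_nonneg (A v))) (by positivity : (0:ℝ) ≤ c * t)]
  -- norm estimates of operator differences
  have est2 : ∀ t : ℝ, 1 ≤ t → ‖B t - P‖ ≤ 1 / (c ^ 2 * t ^ 2) := by
    intro t ht
    have hct : (0:ℝ) < c ^ 2 * t ^ 2 := by positivity
    refine opNorm_le_bound _ (by positivity) fun x => ?_
    set u := x - P x with hu
    have humem := (hP x).2
    have hx : x = P x + u := by rw [hu]; abel
    have h5 : B t x = P x + B t u := by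
      conv_lhs => rw [hx]
      rw [map_add, hBK t (P x) (hP x).1]
    have h6 : (B t - P) x = B t u := by rw [sub_apply, h5]; abel
    rw [h6, one_div, inv_mul_eq_div, le_div_iff₀ hct]
    exact (key t u humem ht).1.trans (hPdec x)
  have est3 : ∀ t : ℝ, 1 ≤ t → ‖(t : ℂ) • (A ∘L B t)‖ ≤ 1 / (c * t) := by
    intro t ht
    have htpos : (0:ℝ) < t := zero_lt_one.trans_le ht
    have hct : (0:ℝ) < c * t := by positivity
    refine opNorm_le_bound _ (by positivity) fun x => ?_
    set u := x - P x with hu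
    have humem := (hP x).2
    have hx : x = P x + u := by rw [hu]; abel
    have h5 : B t x = P x + B t u := by
      conv_lhs => rw [hx]
      rw [map_add, hBK t (P x) (hP x).1]
    have h6 : A (B t x) = A (B t u) := by
      rw [h5, map_add, show A (P x) = 0 from (hP x).1, zero_add]
    rw [smul_apply, norm_smul, comp_apply, h6, Complex.norm_real, Real.norm_of_nonneg htpos.le,
      one_div, inv_mul_eq_div, le_div_iff₀ hct]
    exact (key t u humem ht).2.trans (hPdec x)
  -- continuity
  have hdiff : ∀ t s : ℝ, B t - B s =
      ((s:ℂ) ^ 2 - (t:ℂ) ^ 2) • (B t ∘L ((adjoint A ∘L A) ∘L B s)) := by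
    intro t s
    have e1 : B t ∘L (T s ∘L B s) = B t := by rw [hB' s, ContinuousLinearMap.one_def, ContinuousLinearMap.comp_id]
    have e2 : B t ∘L (T t ∘L B s) = B s := by
      rw [← ContinuousLinearMap.comp_assoc, hB t, ContinuousLinearMap.one_def, ContinuousLinearMap.id_comp]
    calc B t - B s = B t ∘L (T s ∘L B s) - B t ∘L (T t ∘L B s) := by rw [e1, e2]
      _ = B t ∘L ((T s - T t) ∘L B s) := by rw [← comp_sub, ← sub_comp]
      _ = ((s:ℂ) ^ 2 - (t:ℂ) ^ 2) • (B t ∘L ((adjoint A ∘L A) ∘L B s)) := by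
          have hTsub : T s - T t = ((s:ℂ) ^ 2 - (t:ℂ) ^ 2) • (adjoint A ∘L A) := by
            show (1 + (s:ℂ) ^ 2 • (adjoint A ∘L A)) - (1 + (t:ℂ) ^ 2 • (adjoint A ∘L A)) = _
            rw [add_sub_add_left_eq_sub, sub_smul]
          rw [hTsub, smul_comp, comp_smul]
  have hbound : ∀ t s : ℝ, ‖B t - B s‖ ≤ ‖adjoint A ∘L A‖ * |s ^ 2 - t ^ 2| := by
    intro t s
    have h9 : ‖B t ∘L ((adjoint A ∘L A) ∘L B s)‖ ≤ ‖adjoint A ∘L A‖ := by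
      calc ‖B t ∘L ((adjoint A ∘L A) ∘L B s)‖
          ≤ ‖B t‖ * ‖(adjoint A ∘L A) ∘L B s‖ := opNorm_comp_le _ _
        _ ≤ 1 * (‖adjoint A ∘L A‖ * ‖B s‖) := by
            gcongr
            · exact hBn t
            · exact opNorm_comp_le _ _
        _ ≤ 1 * (‖adjoint A ∘L A‖ * 1) := by
            gcongr
            exact hBn s
        _ = ‖adjoint A ∘L A‖ := by ring
    have h10 : ‖((s:ℂ) ^ 2 - (t:ℂ) ^ 2)‖ = |s ^ 2 - t ^ 2| := by
      rw [show ((s:ℂ) ^ 2 - (t:ℂ) ^ 2) = ((s ^ 2 - t ^ 2 : ℝ) : ℂ) by push_cast; ring,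
        Complex.norm_real, Real.norm_eq_abs]
    rw [hdiff t s, norm_smul, h10, mul_comm]
    exact mul_le_mul_of_nonneg_right h9 (abs_nonneg _)
  have hcont : Continuous B := by
    refine continuous_iff_continuousAt.2 fun s => ?_
    rw [ContinuousAt, tendsto_iff_dist_tendsto_zero]
    have hb : ∀ t, dist (B t) (B s) ≤ ‖adjoint A ∘L A‖ * |s ^ 2 - t ^ 2| := fun t => by
      rw [dist_eq_norm]; exact hbound t s
    have hgc : Continuous fun t : ℝ => ‖adjoint A ∘L A‖ * |s ^ 2 - t ^ 2| := by
      continuity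
    have hg : Filter.Tendsto (fun t : ℝ => ‖adjoint A ∘L A‖ * |s ^ 2 - t ^ 2|)
        (nhds s) (nhds 0) := by simpa using hgc.tendsto s
    exact squeeze_zero (fun t => dist_nonneg) hb hg
  exact ⟨hcont, est2, est3⟩


set_option maxHeartbeats 1000000 in
lemma lowbound (A : E →L[ℂ] F) (hrange : IsClosed (Set.range A)) :
    ∃ c : ℝ, 0 < c ∧ (∀ x ∈ (LinearMap.ker (A : E →ₗ[ℂ] F) : Submodule ℂ E)ᗮ, c * ‖x‖ ≤ ‖A x‖) ∧
      (∀ y ∈ (LinearMap.ker ((adjoint A : F →L[ℂ] E) : F →ₗ[ℂ] E) : Submodule ℂ F)ᗮ, c * ‖y‖ ≤ ‖adjoint A y‖) := by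
  haveI hK : CompleteSpace (LinearMap.ker (A : E →ₗ[ℂ] F)) :=
    (ContinuousLinearMap.isClosed_ker A).completeSpace_coe
  have hrs : ((LinearMap.range (A : E →ₗ[ℂ] F) : Submodule ℂ F) : Set F) = Set.range A := by
    rw [LinearMap.coe_range]; rfl
  haveI : CompleteSpace (LinearMap.range (A : E →ₗ[ℂ] F)) := (hrs ▸ hrange).completeSpace_coe
  haveI : CompleteSpace ((LinearMap.ker (A : E →ₗ[ℂ] F) : Submodule ℂ E)ᗮ) :=
    (Submodule.isClosed_orthogonal _).completeSpace_coe
  set f : ((LinearMap.ker (A : E →ₗ[ℂ] F) : Submodule ℂ E)ᗮ) →L[ℂ] (LinearMap.range (A : E →ₗ[ℂ] F)) :=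
    (A ∘L (LinearMap.ker (A : E →ₗ[ℂ] F) : Submodule ℂ E)ᗮ.subtypeL).codRestrict (LinearMap.range (A : E →ₗ[ℂ] F))
      (fun x => LinearMap.mem_range_self _ _) with hf
  have hinj : f.ker = ⊥ := by
    rw [Submodule.eq_bot_iff]
    rintro ⟨v, hv⟩ hfv
    have hAv : A v = 0 := by
      have := congrArg Subtype.val hfv
      exact this
    have h0 : ⟪v, v⟫_ℂ = 0 :=
      (Submodule.mem_orthogonal _ _).1 hv v (LinearMap.mem_ker.2 hAv)
    exact Subtype.ext (inner_self_eq_zero.1 h0)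
  have hsurj : f.range = ⊤ := by
    rw [LinearMap.range_eq_top]
    rintro ⟨y, hy⟩
    obtain ⟨x, hx⟩ := LinearMap.mem_range.1 hy
    obtain ⟨k, hk, z, hz, hxz⟩ := (LinearMap.ker (A : E →ₗ[ℂ] F)).exists_add_mem_mem_orthogonal x
    refine ⟨⟨z, hz⟩, Subtype.ext ?_⟩
    have hAk : A k = 0 := hk
    have : A z = y := by rw [← hx, ContinuousLinearMap.coe_coe, hxz, map_add, hAk, zero_add]
    exact this
  set e := ContinuousLinearEquiv.ofBijective f hinj hsurj with he
  set N : ℝ := ‖(e.symm : (LinearMap.range (A : E →ₗ[ℂ] F)) →L[ℂ] ((LinearMap.ker (A : E →ₗ[ℂ] F) : Submodule ℂ E)ᗮ))‖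
    with hN
  set M : ℝ := N + 1 with hM
  have hNnn : 0 ≤ N := norm_nonneg _
  have hMpos : 0 < M := by positivity
  have hbound1 : ∀ x ∈ (LinearMap.ker (A : E →ₗ[ℂ] F) : Submodule ℂ E)ᗮ, M⁻¹ * ‖x‖ ≤ ‖A x‖ := by
    intro x hx
    have h2 : (⟨x, hx⟩ : (LinearMap.ker (A : E →ₗ[ℂ] F) : Submodule ℂ E)ᗮ) = e.symm (e ⟨x, hx⟩) := by
      rw [e.symm_apply_apply]
    have heq : e ⟨x, hx⟩ = f ⟨x, hx⟩ := rfl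
    have h3 : ‖e ⟨x, hx⟩‖ = ‖A x‖ := by rw [heq]; rfl
    have h5 : ‖e.symm (e ⟨x, hx⟩)‖ ≤ N * ‖e ⟨x, hx⟩‖ := by
      have h7 := ContinuousLinearMap.le_opNorm
        (e.symm : (LinearMap.range (A : E →ₗ[ℂ] F)) →L[ℂ] ((LinearMap.ker (A : E →ₗ[ℂ] F) : Submodule ℂ E)ᗮ)) (e ⟨x, hx⟩)
      simpa [← hN] using h7
    rw [← h2, h3] at h5
    have h6 : ‖x‖ = ‖(⟨x, hx⟩ : (LinearMap.ker (A : E →ₗ[ℂ] F) : Submodule ℂ E)ᗮ)‖ := rfl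
    rw [inv_mul_le_iff₀ hMpos, h6]
    nlinarith [h5, norm_nonneg (A x)]
  refine ⟨M⁻¹, by positivity, hbound1, ?_⟩
  -- second bound, for the adjoint
  have hker' : LinearMap.ker ((adjoint A : F →L[ℂ] E) : F →ₗ[ℂ] E) = (LinearMap.range (A : E →ₗ[ℂ] F) : Submodule ℂ F)ᗮ := by
    ext y
    simp only [LinearMap.mem_ker, Submodule.mem_orthogonal]
    constructor
    · intro h u hu
      obtain ⟨x, hx⟩ := LinearMap.mem_range.1 hu
      rw [← hx, ContinuousLinearMap.coe_coe, ← adjoint_inner_right, show adjoint A y = 0 from h, inner_zero_right]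
    · intro h
      have h2 := h (A (adjoint A y)) (LinearMap.mem_range_self _ _)
      rw [← adjoint_inner_right] at h2
      exact inner_self_eq_zero.1 h2
  have horth : (LinearMap.ker ((adjoint A : F →L[ℂ] E) : F →ₗ[ℂ] E) : Submodule ℂ F)ᗮ = LinearMap.range (A : E →ₗ[ℂ] F) := by
    rw [hker', Submodule.orthogonal_orthogonal]
  intro y hy
  rw [horth] at hy
  obtain ⟨x, hx⟩ := LinearMap.mem_range.1 hy
  obtain ⟨k, hk, z, hz, hxz⟩ := (LinearMap.ker (A : E →ₗ[ℂ] F)).exists_add_mem_mem_orthogonal x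
  have hAk : A k = 0 := hk
  have hAz : A z = y := by rw [← hx, ContinuousLinearMap.coe_coe, hxz, map_add, hAk, zero_add]
  have hzb : M⁻¹ * ‖z‖ ≤ ‖A z‖ := hbound1 z hz
  have hsq : ‖A z‖ ^ 2 ≤ ‖adjoint A (A z)‖ * ‖z‖ := by
    have h4 : (⟪adjoint A (A z), z⟫_ℂ).re = ‖A z‖ ^ 2 := by
      rw [adjoint_inner_left]
      simp [inner_self_eq_norm_sq_to_K, ← Complex.ofReal_pow]
    calc ‖A z‖ ^ 2 = (⟪adjoint A (A z), z⟫_ℂ).re := h4.symm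
      _ ≤ ‖adjoint A (A z)‖ * ‖z‖ := re_inner_le_norm (𝕜 := ℂ) _ _
  rw [← hAz]
  rcases eq_or_lt_of_le (norm_nonneg z) with h0 | h0
  · have hz0 : z = (0 : E) := norm_eq_zero.1 h0.symm
    rw [hz0]
    simpa using norm_nonneg (adjoint A (A (0 : E)))
  · have hMi : 0 < M⁻¹ := by positivity
    nlinarith [hzb, hsq, norm_nonneg (A z), norm_nonneg (adjoint A (A z))]

end Aux


variable {H₁ H₂ : Type*}
  [NormedAddCommGroup H₁] [InnerProductSpace ℂ H₁] [CompleteSpace H₁]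
  [NormedAddCommGroup H₂] [InnerProductSpace ℂ H₂] [CompleteSpace H₂]

/-- The 2×2 block operator `(B11 B12; B21 B22)` on `H₁ ⊕ H₂`. -/
noncomputable def blockOp (B11 : H₁ →L[ℂ] H₁) (B12 : H₂ →L[ℂ] H₁)
    (B21 : H₁ →L[ℂ] H₂) (B22 : H₂ →L[ℂ] H₂) : (H₁ × H₂) →L[ℂ] (H₁ × H₂) :=
  (B11.coprod B12).prod (B21.coprod B22)

lemma blockOp_apply (a : H₁ →L[ℂ] H₁) (b : H₂ →L[ℂ] H₁)
    (c : H₁ →L[ℂ] H₂) (d : H₂ →L[ℂ] H₂) (z : H₁ × H₂) :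
    blockOp a b c d z = (a z.1 + b z.2, c z.1 + d z.2) := rfl

lemma blockOp_sub (a a' : H₁ →L[ℂ] H₁) (b b' : H₂ →L[ℂ] H₁)
    (c c' : H₁ →L[ℂ] H₂) (d d' : H₂ →L[ℂ] H₂) :
    blockOp a b c d - blockOp a' b' c' d' = blockOp (a - a') (b - b') (c - c') (d - d') := by
  ext z <;> simp [blockOp_apply] <;> abel

lemma blockOp_norm_le (a : H₁ →L[ℂ] H₁) (b : H₂ →L[ℂ] H₁)
    (c : H₁ →L[ℂ] H₂) (d : H₂ →L[ℂ] H₂) :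
    ‖blockOp a b c d‖ ≤ ‖a‖ + ‖b‖ + ‖c‖ + ‖d‖ := by
  refine opNorm_le_bound _ (by positivity) fun z => ?_
  rw [blockOp_apply, Prod.norm_def]
  have h1 : ‖a z.1 + b z.2‖ ≤ (‖a‖ + ‖b‖ + ‖c‖ + ‖d‖) * ‖z‖ := by
    calc ‖a z.1 + b z.2‖ ≤ ‖a‖ * ‖z.1‖ + ‖b‖ * ‖z.2‖ :=
          (norm_add_le _ _).trans (by gcongr <;> [exact le_opNorm _ _; exact le_opNorm _ _])
      _ ≤ (‖a‖ + ‖b‖ + ‖c‖ + ‖d‖) * ‖z‖ := by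
          have := norm_fst_le z; have := norm_snd_le z
          nlinarith [norm_nonneg a, norm_nonneg b, norm_nonneg c, norm_nonneg d,
            norm_nonneg z.1, norm_nonneg z.2, norm_nonneg z]
  have h2 : ‖c z.1 + d z.2‖ ≤ (‖a‖ + ‖b‖ + ‖c‖ + ‖d‖) * ‖z‖ := by
    calc ‖c z.1 + d z.2‖ ≤ ‖c‖ * ‖z.1‖ + ‖d‖ * ‖z.2‖ :=
          (norm_add_le _ _).trans (by gcongr <;> [exact le_opNorm _ _; exact le_opNorm _ _])
      _ ≤ (‖a‖ + ‖b‖ + ‖c‖ + ‖d‖) * ‖z‖ := by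
          have := norm_fst_le z; have := norm_snd_le z
          nlinarith [norm_nonneg a, norm_nonneg b, norm_nonneg c, norm_nonneg d,
            norm_nonneg z.1, norm_nonneg z.2, norm_nonneg z]
  exact max_le h1 h2

lemma blockOp_eq (a : H₁ →L[ℂ] H₁) (b : H₂ →L[ℂ] H₁)
    (c : H₁ →L[ℂ] H₂) (d : H₂ →L[ℂ] H₂) :
    blockOp a b c d = (inl ℂ H₁ H₂ ∘L a ∘L fst ℂ H₁ H₂) + (inl ℂ H₁ H₂ ∘L b ∘L snd ℂ H₁ H₂)
      + (inr ℂ H₁ H₂ ∘L c ∘L fst ℂ H₁ H₂) + (inr ℂ H₁ H₂ ∘L d ∘L snd ℂ H₁ H₂) := by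
  ext z <;> simp [blockOp_apply]


set_option maxHeartbeats 1000000 in
/-- Let `A : H₁ → H₂` be a bounded Fredholm operator with closed range, and for
`t ≥ 1` let `Gr(tA)` be the graph projection, with `B t = (1+t²A*A)⁻¹` and
`C t = (1+t²AA*)⁻¹`. Then `t ↦ Gr(tA)` is norm-continuous on `[1,∞)` and
converges in operator norm, as `t → ∞`, to `diag(π_{ker A}, 1 − π_{ker A*})`. -/
theorem graph_projection_path_continuous_tendsto
    (A : H₁ →L[ℂ] H₂)
    (hker : FiniteDimensional ℂ (LinearMap.ker (A : H₁ →ₗ[ℂ] H₂)))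
    (hcoker : FiniteDimensional ℂ (LinearMap.ker ((adjoint A : H₂ →L[ℂ] H₁) : H₂ →ₗ[ℂ] H₁)))
    (hrange : IsClosed (Set.range A))
    (B : ℝ → H₁ →L[ℂ] H₁) (C : ℝ → H₂ →L[ℂ] H₂)
    (hB : ∀ t : ℝ, B t ∘L (1 + (t ^ 2 : ℂ) • (adjoint A ∘L A)) = 1)
    (hB' : ∀ t : ℝ, (1 + (t ^ 2 : ℂ) • (adjoint A ∘L A)) ∘L B t = 1)
    (hC : ∀ t : ℝ, C t ∘L (1 + (t ^ 2 : ℂ) • (A ∘L adjoint A)) = 1)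
    (hC' : ∀ t : ℝ, (1 + (t ^ 2 : ℂ) • (A ∘L adjoint A)) ∘L C t = 1)
    (P : H₁ →L[ℂ] H₁) (Q : H₂ →L[ℂ] H₂)
    (hPK : ∀ x ∈ LinearMap.ker (A : H₁ →ₗ[ℂ] H₂), P x = x)
    (hPKo : ∀ x ∈ (LinearMap.ker (A : H₁ →ₗ[ℂ] H₂) : Submodule ℂ H₁)ᗮ, P x = 0)
    (hQK : ∀ x ∈ LinearMap.ker ((adjoint A : H₂ →L[ℂ] H₁) : H₂ →ₗ[ℂ] H₁), Q x = x)
    (hQKo : ∀ x ∈ (LinearMap.ker ((adjoint A : H₂ →L[ℂ] H₁) : H₂ →ₗ[ℂ] H₁) : Submodule ℂ H₂)ᗮ, Q x = 0) :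
    ContinuousOn
        (fun t : ℝ => blockOp (B t) ((t : ℂ) • (B t ∘L adjoint A))
          ((t : ℂ) • (A ∘L B t)) (1 - C t)) (Set.Ici 1) ∧
      Filter.Tendsto
        (fun t : ℝ =>
          ‖blockOp (B t) ((t : ℂ) • (B t ∘L adjoint A)) ((t : ℂ) • (A ∘L B t))
              (1 - C t) - blockOp P 0 0 (1 - Q)‖)
        Filter.atTop (nhds 0) := by
  haveI : CompleteSpace (LinearMap.ker (A : H₁ →ₗ[ℂ] H₂)) :=
    (ContinuousLinearMap.isClosed_ker A).completeSpace_coe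
  haveI : CompleteSpace (LinearMap.ker ((adjoint A : H₂ →L[ℂ] H₁) : H₂ →ₗ[ℂ] H₁)) :=
    (ContinuousLinearMap.isClosed_ker (adjoint A)).completeSpace_coe
  have hPdec := blockOpAux_decomp (LinearMap.ker (A : H₁ →ₗ[ℂ] H₂)) P hPK hPKo
  have hQdec := blockOpAux_decomp (LinearMap.ker ((adjoint A : H₂ →L[ℂ] H₁) : H₂ →ₗ[ℂ] H₁)) Q hQK hQKo
  obtain ⟨c, hc, hlow1, hlow2⟩ := lowbound A hrange
  obtain ⟨contB, estB, estAB⟩ := core A B hB hB' P hPdec c hc hlow1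
  have hC2 : ∀ t : ℝ, C t ∘L (1 + (t ^ 2 : ℂ) • (adjoint (adjoint A) ∘L adjoint A)) = 1 := by
    intro t; rw [adjoint_adjoint]; exact hC t
  have hC2' : ∀ t : ℝ, (1 + (t ^ 2 : ℂ) • (adjoint (adjoint A) ∘L adjoint A)) ∘L C t = 1 := by
    intro t; rw [adjoint_adjoint]; exact hC' t
  obtain ⟨contC, estC, estAC⟩ := core (adjoint A) C hC2 hC2' Q hQdec c hc hlow2
  -- intertwining identity : B t ∘ A* = A* ∘ C t
  have hBA : ∀ t : ℝ, B t ∘L adjoint A = adjoint A ∘L C t := by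
    intro t
    have h1 : adjoint A ∘L (1 + (t ^ 2 : ℂ) • (A ∘L adjoint A))
        = (1 + (t ^ 2 : ℂ) • (adjoint A ∘L A)) ∘L adjoint A := by
      ext x
      simp
    have h2 : adjoint A ∘L ((1 + (t ^ 2 : ℂ) • (A ∘L adjoint A)) ∘L C t) = adjoint A := by
      rw [hC' t, ContinuousLinearMap.one_def, ContinuousLinearMap.comp_id]
    calc B t ∘L adjoint A
        = B t ∘L (adjoint A ∘L ((1 + (t ^ 2 : ℂ) • (A ∘L adjoint A)) ∘L C t)) := by rw [h2]
      _ = B t ∘L ((adjoint A ∘L (1 + (t ^ 2 : ℂ) • (A ∘L adjoint A))) ∘L C t) := by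
          rw [ContinuousLinearMap.comp_assoc]
      _ = B t ∘L (((1 + (t ^ 2 : ℂ) • (adjoint A ∘L A)) ∘L adjoint A) ∘L C t) := by rw [h1]
      _ = (B t ∘L (1 + (t ^ 2 : ℂ) • (adjoint A ∘L A))) ∘L (adjoint A ∘L C t) := by
          rw [ContinuousLinearMap.comp_assoc, ContinuousLinearMap.comp_assoc]
      _ = adjoint A ∘L C t := by
          rw [hB t, ContinuousLinearMap.one_def, ContinuousLinearMap.id_comp]
  constructor
  · -- continuity
    have contF : Continuous (fun t : ℝ => blockOp (B t) ((t : ℂ) • (B t ∘L adjoint A))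
        ((t : ℂ) • (A ∘L B t)) (1 - C t)) := by
      simp only [blockOp_eq]
      have c1 : Continuous fun t : ℝ => B t := contB
      have c2 : Continuous fun t : ℝ => (t : ℂ) • (B t ∘L adjoint A) :=
        Complex.continuous_ofReal.smul (contB.clm_comp continuous_const)
      have c3 : Continuous fun t : ℝ => (t : ℂ) • (A ∘L B t) :=
        Complex.continuous_ofReal.smul (continuous_const.clm_comp contB)
      have c4 : Continuous fun t : ℝ => 1 - C t := continuous_const.sub contC
      exact (((continuous_const.clm_comp (c1.clm_comp continuous_const)).add
        (continuous_const.clm_comp (c2.clm_comp continuous_const))).add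
        (continuous_const.clm_comp (c3.clm_comp continuous_const))).add
        (continuous_const.clm_comp (c4.clm_comp continuous_const))
    exact contF.continuousOn
  · -- convergence
    have hbnd : ∀ t : ℝ, 1 ≤ t →
        ‖blockOp (B t) ((t : ℂ) • (B t ∘L adjoint A)) ((t : ℂ) • (A ∘L B t)) (1 - C t)
          - blockOp P 0 0 (1 - Q)‖ ≤ (2 / c ^ 2 + 2 / c) * t⁻¹ := by
      intro t ht
      have htpos : (0 : ℝ) < t := lt_of_lt_of_le zero_lt_one ht
      have hinv : (t ^ 2)⁻¹ ≤ t⁻¹ := by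
        apply inv_anti₀ htpos
        nlinarith
      have e1 : 1 / (c ^ 2 * t ^ 2) ≤ 1 / c ^ 2 * t⁻¹ := by
        rw [one_div, mul_inv, one_div]
        exact mul_le_mul_of_nonneg_left hinv (by positivity)
      have e2 : 1 / (c * t) = 1 / c * t⁻¹ := by
        rw [one_div, mul_inv, one_div]
      have n1 : ‖B t - P‖ ≤ 1 / c ^ 2 * t⁻¹ := (estB t ht).trans e1
      have n2 : ‖(t : ℂ) • (B t ∘L adjoint A) - 0‖ ≤ 1 / c * t⁻¹ := by
        rw [sub_zero, hBA t, ← e2]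
        exact estAC t ht
      have n3 : ‖(t : ℂ) • (A ∘L B t) - 0‖ ≤ 1 / c * t⁻¹ := by
        rw [sub_zero, ← e2]
        exact estAB t ht
      have n4 : ‖(1 - C t) - (1 - Q)‖ ≤ 1 / c ^ 2 * t⁻¹ := by
        have h5 : (1 - C t) - (1 - Q) = -(C t - Q) := by abel
        rw [h5, norm_neg]
        exact (estC t ht).trans e1
      rw [blockOp_sub]
      refine le_trans (blockOp_norm_le _ _ _ _) ?_
      refine le_trans (add_le_add (add_le_add (add_le_add n1 n2) n3) n4) (le_of_eq ?_)
      ring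
    have hK : Filter.Tendsto (fun t : ℝ => (2 / c ^ 2 + 2 / c) * t⁻¹)
        Filter.atTop (nhds 0) := by
      have := tendsto_inv_atTop_zero.const_mul (2 / c ^ 2 + 2 / c)
      simpa using this
    refine squeeze_zero' (Filter.Eventually.of_forall fun t => ContinuousLinearMap.opNorm_nonneg _) ?_ hK
    exact Filter.eventually_atTop.2 ⟨1, hbnd⟩
end
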